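/- arXiv:2405.14760 — 8 statements merged into one kernel-verified Lean document; each statement's English description precedes it below -/
import Mathlib

section
/- Let V ⊆ ℝ² be open, B a real constant, and σ : V × ℝ × ℝ → ℝ (coordinates (x, y, v, u)) a twice continuously differentiable function satisfying, at every point, ∂σ/∂v = B·∂σ/∂u and −2σ·∂²σ/∂u² + (∂σ/∂u)² + 1/4 = 0. Then there exist continuous functions C, D : V → ℝ, with C nowhere vanishing, such that σ(x, y, v, u) = C(x,y)·(u + B·v + D(x,y))² + 1/(16·C(x,y)) for all (x, y, v, u) ∈ V × ℝ × ℝ. -/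
/-!
Along every line in the direction `(0, 0, 1, -B)` the first equation makes `σ` constant, so
`σ (x, y, v, u) = σ (x, y, 0, u + B v)`. On a line in the `u`-direction, `h t = σ (x, y, 0, t)`
solves `-2 h h'' + h'² + 1/4 = 0`; hence `h` never vanishes and `h'' = (h'² + 1/4) / (2 h)` has
derivative `2 h' (2 h h'' - h'² - 1/4) / (2 h)² = 0`. So `h` is a quadratic `C t² + b t + c` whose
discriminant is `-1/4`, and completing the square gives the normal form. The coefficients are
built from `σ` and `∂σ/∂u` on `v = u = 0`, which makes them continuous in `(x, y)`.
-/

section LineDerivative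

variable {E F : Type*} [NormedAddCommGroup E] [NormedSpace ℝ E]
  [NormedAddCommGroup F] [NormedSpace ℝ F] {f : E → F} {p w : E}

theorem hasDerivAt_comp_add_smul {t : ℝ} (hf : DifferentiableAt ℝ f (p + t • w)) :
    HasDerivAt (fun s : ℝ => f (p + s • w)) (fderiv ℝ f (p + t • w) w) t := by
  have hline : HasDerivAt (fun s : ℝ => p + s • w) w t := by
    simpa using ((hasDerivAt_id t).smul_const w).const_add p
  exact hf.hasFDerivAt.comp_hasDerivAt t hline

theorem apply_add_smul_eq_of_fderiv_apply_eq_zero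
    (hf : ∀ s : ℝ, DifferentiableAt ℝ f (p + s • w))
    (hw : ∀ s : ℝ, fderiv ℝ f (p + s • w) w = 0) (t : ℝ) : f (p + t • w) = f p := by
  simpa using is_const_of_deriv_eq_zero
    (fun s => (hasDerivAt_comp_add_smul (hf s)).differentiableAt)
    (fun s => (hasDerivAt_comp_add_smul (hf s)).deriv.trans (hw s)) t 0

theorem ContDiffOn.differentiableAt_fderiv_apply {s : Set E} (hf : ContDiffOn ℝ 2 f s)
    (hs : IsOpen s) (hp : p ∈ s) : DifferentiableAt ℝ (fun q => fderiv ℝ f q w) p :=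
  (((hf.contDiffAt (hs.mem_nhds hp)).fderiv_right (m := 1) le_rfl).differentiableAt
    one_ne_zero).clm_apply (differentiableAt_const w)

end LineDerivative

theorem eq_of_hasDerivAt_eq {f g f' : ℝ → ℝ} (hf : ∀ t, HasDerivAt f (f' t) t)
    (hg : ∀ t, HasDerivAt g (f' t) t) (h0 : f 0 = g 0) (t : ℝ) : f t = g t := by
  have hfg : ∀ s, HasDerivAt (f - g) 0 s := fun s => by simpa using (hf s).sub (hg s)
  have := is_const_of_deriv_eq_zero (fun s => (hfg s).differentiableAt)
    (fun s => (hfg s).deriv) t 0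
  simp only [Pi.sub_apply, h0, sub_self] at this
  exact sub_eq_zero.mp this

theorem eq_quadratic_of_hasDerivAt_const {f f' : ℝ → ℝ} {A : ℝ}
    (hf : ∀ t, HasDerivAt f (f' t) t) (hf' : ∀ t, HasDerivAt f' A t) (t : ℝ) :
    f t = A / 2 * t ^ 2 + f' 0 * t + f 0 := by
  have hlin : ∀ s, f' s = A * s + f' 0 := eq_of_hasDerivAt_eq hf'
    (fun s => by simpa using ((hasDerivAt_id' s).const_mul A).add_const (f' 0)) (by simp)
  refine eq_of_hasDerivAt_eq (g := fun s => A / 2 * s ^ 2 + f' 0 * s + f 0) hf (fun s => ?_)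
    (by simp) t
  refine ((((hasDerivAt_pow 2 s).const_mul (A / 2)).add
    ((hasDerivAt_id' s).const_mul (f' 0))).add_const (f 0)).congr_deriv ?_
  rw [hlin s]
  ring

theorem ne_zero_of_ode {a b c : ℝ} (h : -2 * a * c + b ^ 2 + 1 / 4 = 0) : a ≠ 0 := by
  rintro rfl
  nlinarith [sq_nonneg b]

theorem eq_quadratic_of_ode {h h' h'' : ℝ → ℝ} (hh : ∀ t, HasDerivAt h (h' t) t)
    (hh' : ∀ t, HasDerivAt h' (h'' t) t) (hode : ∀ t, -2 * h t * h'' t + h' t ^ 2 + 1 / 4 = 0)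
    (t : ℝ) : h t = (h' 0 ^ 2 + 1 / 4) / (4 * h 0) * t ^ 2 + h' 0 * t + h 0 := by
  have hh_ne : ∀ s, 2 * h s ≠ 0 := fun s => mul_ne_zero two_ne_zero (ne_zero_of_ode (hode s))
  have hh''_eq : h'' = fun s => (h' s ^ 2 + 1 / 4) / (2 * h s) := by
    funext s
    rw [eq_div_iff (hh_ne s)]
    linear_combination -(hode s)
  have hh''_deriv : ∀ s, HasDerivAt h'' 0 s := by
    intro s
    rw [hh''_eq]
    refine ((((hh' s).pow 2).add_const (1 / 4)).div ((hh s).const_mul 2)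
      (hh_ne s)).congr_deriv ?_
    rw [div_eq_zero_iff]
    left
    simp only [Pi.pow_apply]
    linear_combination (-2 * h' s) * hode s
  have hh''_const : ∀ s, h'' s = h'' 0 :=
    eq_of_hasDerivAt_eq (g := fun _ => h'' 0) hh''_deriv (fun s => hasDerivAt_const s _) rfl
  have hA : h'' 0 / 2 = (h' 0 ^ 2 + 1 / 4) / (4 * h 0) := by
    rw [eq_div_iff (mul_ne_zero four_ne_zero (ne_zero_of_ode (hode 0)))]
    linear_combination -(hode 0)
  rw [← hA]
  exact eq_quadratic_of_hasDerivAt_const hh (fun s => hh''_const s ▸ hh' s) t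

theorem quadratic_eq_vertex_form {K : Type*} [Field K] [NeZero (2 : K)] {a : K} (ha : a ≠ 0)
    (b c x : K) :
    a * x ^ 2 + b * x + c = a * (x + b / (2 * a)) ^ 2 - discrim a b c / (4 * a) := by
  have h4 : (4 : K) = 2 * 2 := by norm_num
  rw [discrim, h4]
  field_simp
  ring

def slab (V : Set (ℝ × ℝ)) : Set (ℝ × ℝ × ℝ × ℝ) := {p | (p.1, p.2.1) ∈ V}

local notation "eᵤ" => ((0, 0, 0, 1) : ℝ × ℝ × ℝ × ℝ)

section Slab

variable {V : Set (ℝ × ℝ)} {σ : ℝ × ℝ × ℝ × ℝ → ℝ}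

theorem isOpen_slab (hV : IsOpen V) : IsOpen (slab V) :=
  hV.preimage (by fun_prop)

theorem ContinuousOn.comp_slab_zero (hσ : ContinuousOn σ (slab V)) :
    ContinuousOn (fun q : ℝ × ℝ => σ (q.1, q.2, 0, 0)) V :=
  hσ.comp (by fun_prop) fun _ hq => hq

theorem apply_eq_apply_zero_add_mul_of_fderiv_eq {B : ℝ}
    (hσ : ∀ p ∈ slab V, DifferentiableAt ℝ σ p)
    (hinv : ∀ p ∈ slab V, fderiv ℝ σ p (0, 0, 1, 0) = B * fderiv ℝ σ p eᵤ)
    {x y : ℝ} (hxy : (x, y) ∈ V) (v u : ℝ) : σ (x, y, v, u) = σ (x, y, 0, u + B * v) := by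
  have hmem : ∀ s : ℝ, ((x, y, 0, u + B * v) : ℝ × ℝ × ℝ × ℝ) + s • (0, 0, 1, -B) ∈ slab V :=
    fun s => by simpa [slab] using hxy
  have hw : ∀ p ∈ slab V, fderiv ℝ σ p (0, 0, 1, -B) = 0 := fun p hp => by
    rw [show ((0, 0, 1, -B) : ℝ × ℝ × ℝ × ℝ) = (0, 0, 1, 0) + (-B) • eᵤ by simp, map_add,
      map_smul, hinv p hp, smul_eq_mul]
    ring
  have hline : ((x, y, 0, u + B * v) : ℝ × ℝ × ℝ × ℝ) + v • (0, 0, 1, -B) = (x, y, v, u) := by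
    ext <;> simp; ring
  rw [← hline]
  exact apply_add_smul_eq_of_fderiv_apply_eq_zero (fun s => hσ _ (hmem s))
    (fun s => hw _ (hmem s)) v

theorem eq_quadratic_of_ode_on_slab (hV : IsOpen V) (hσ : ContDiffOn ℝ 2 σ (slab V))
    (hode : ∀ p ∈ slab V,
      -2 * σ p * fderiv ℝ (fun q => fderiv ℝ σ q eᵤ) p eᵤ + fderiv ℝ σ p eᵤ ^ 2 + 1 / 4 = 0)
    {x y : ℝ} (hxy : (x, y) ∈ V) (t : ℝ) :
    σ (x, y, 0, t) = (fderiv ℝ σ (x, y, 0, 0) eᵤ ^ 2 + 1 / 4) / (4 * σ (x, y, 0, 0)) * t ^ 2 +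
      fderiv ℝ σ (x, y, 0, 0) eᵤ * t + σ (x, y, 0, 0) := by
  have hmem : ∀ s : ℝ, ((x, y, 0, 0) : ℝ × ℝ × ℝ × ℝ) + s • eᵤ ∈ slab V :=
    fun s => by simpa [slab] using hxy
  have hσ1 : ∀ s : ℝ, DifferentiableAt ℝ σ ((x, y, 0, 0) + s • eᵤ) := fun s =>
    (hσ.contDiffAt ((isOpen_slab hV).mem_nhds (hmem s))).differentiableAt two_ne_zero
  simpa using eq_quadratic_of_ode (fun s => hasDerivAt_comp_add_smul (hσ1 s))
    (fun s => hasDerivAt_comp_add_smul (hσ.differentiableAt_fderiv_apply (isOpen_slab hV) (hmem s)))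
    (fun s => hode _ (hmem s)) t

end Slab

/-- If a `C²` function `σ` on `V × ℝ × ℝ` (coordinates `(x, y, v, u)`) satisfies
`∂σ/∂v = B·∂σ/∂u` and `−2σ·∂²σ/∂u² + (∂σ/∂u)² + 1/4 = 0`, then
`σ = C(x,y)·(u + B·v + D(x,y))² + 1/(16·C(x,y))` for continuous functions `C ≠ 0` and `D`. -/
theorem sigma_normal_form
    (V : Set (ℝ × ℝ)) (hV : IsOpen V) (B : ℝ)
    (σ : ℝ × ℝ × ℝ × ℝ → ℝ)
    (hσ : ContDiffOn ℝ 2 σ {p : ℝ × ℝ × ℝ × ℝ | (p.1, p.2.1) ∈ V})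
    (hinv : ∀ p : ℝ × ℝ × ℝ × ℝ, (p.1, p.2.1) ∈ V →
      fderiv ℝ σ p ((0, 0, 1, 0) : ℝ × ℝ × ℝ × ℝ) =
        B * fderiv ℝ σ p ((0, 0, 0, 1) : ℝ × ℝ × ℝ × ℝ))
    (hode : ∀ p : ℝ × ℝ × ℝ × ℝ, (p.1, p.2.1) ∈ V →
      -2 * σ p *
          fderiv ℝ (fun q => fderiv ℝ σ q ((0, 0, 0, 1) : ℝ × ℝ × ℝ × ℝ)) p
            ((0, 0, 0, 1) : ℝ × ℝ × ℝ × ℝ) +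
        (fderiv ℝ σ p ((0, 0, 0, 1) : ℝ × ℝ × ℝ × ℝ)) ^ 2 + 1 / 4 = 0) :
    ∃ C D : ℝ × ℝ → ℝ, ContinuousOn C V ∧ ContinuousOn D V ∧
      (∀ q ∈ V, C q ≠ 0) ∧
      ∀ x y v u : ℝ, (x, y) ∈ V →
        σ (x, y, v, u) = C (x, y) * (u + B * v + D (x, y)) ^ 2 + 1 / (16 * C (x, y)) := by
  have hS := isOpen_slab hV
  have hσ1 : ∀ p ∈ slab V, DifferentiableAt ℝ σ p := fun p hp =>
    (hσ.contDiffAt (hS.mem_nhds hp)).differentiableAt two_ne_zero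
  set c : ℝ × ℝ → ℝ := fun q => σ (q.1, q.2, 0, 0)
  set b : ℝ × ℝ → ℝ := fun q => fderiv ℝ σ (q.1, q.2, 0, 0) eᵤ
  set C : ℝ × ℝ → ℝ := fun q => (b q ^ 2 + 1 / 4) / (4 * c q)
  have hc : ∀ q ∈ V, 4 * c q ≠ 0 := fun q hq =>
    mul_ne_zero four_ne_zero (ne_zero_of_ode (hode _ hq))
  have hC : ∀ q ∈ V, C q ≠ 0 := fun q hq => div_ne_zero (by positivity) (hc q hq)
  have hdisc : ∀ q ∈ V, discrim (C q) (b q) (c q) = -1 / 4 := fun q hq => by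
    rw [discrim, mul_comm 4, mul_assoc, div_mul_cancel₀ _ (hc q hq)]
    ring
  have hb_cont : ContinuousOn b V :=
    ((hσ.continuousOn_fderiv_of_isOpen hS one_le_two).clm_apply
      continuousOn_const).comp_slab_zero
  have hC_cont : ContinuousOn C V :=
    ((hb_cont.pow 2).add continuousOn_const).div
      (continuousOn_const.mul hσ.continuousOn.comp_slab_zero) hc
  have hquad : ∀ x y : ℝ, (x, y) ∈ V → ∀ t : ℝ,
      σ (x, y, 0, t) = C (x, y) * t ^ 2 + b (x, y) * t + c (x, y) :=
    fun x y hxy => eq_quadratic_of_ode_on_slab hV hσ hode hxy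
  clear_value C b c
  refine ⟨C, fun q => b q / (2 * C q), hC_cont,
    hb_cont.div (continuousOn_const.mul hC_cont) fun q hq => mul_ne_zero two_ne_zero (hC q hq),
    hC, fun x y v u hxy => ?_⟩
  rw [apply_eq_apply_zero_add_mul_of_fderiv_eq hσ1 hinv hxy, hquad x y hxy,
    quadratic_eq_vertex_form (hC _ hxy), hdisc _ hxy]
  ring
end

section
/- Let σ : ℝ → ℝ be twice continuously differentiable. Then σ satisfies −2·σ(t)·σ''(t) + σ'(t)² + 1/4 = 0 for all t ∈ ℝ if and only if there exist real numbers A ≠ 0 and D such that σ(t) = A·(t + D)² + 1/(16·A) for all t ∈ ℝ. -/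
/-!
A solution σ never vanishes, and the equation says exactly that `(σ'² + 1/4)/σ` has derivative
`σ' (σ'² + 1/4 - 2σσ'') / σ² = 0`. Hence `σ'² + 1/4 = cσ` for a constant `c`, which is nonzero;
substituting this back into the equation gives `σ'' = c/2`, so σ is a quadratic polynomial with
leading coefficient `c/4`, and the first integral at `t = 0` turns it into `A(t + D)² + 1/(16A)`
by completing the square.
-/

section

variable {𝕜 F : Type*} [RCLike 𝕜] [NormedAddCommGroup F] [NormedSpace 𝕜 F]

theorem eq_of_forall_hasDerivAt {f g f' : 𝕜 → F} (hf : ∀ x, HasDerivAt f (f' x) x)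
    (hg : ∀ x, HasDerivAt g (f' x) x) (x₀ : 𝕜) (h : f x₀ = g x₀) : f = g :=
  eq_of_fderiv_eq (fun x => (hf x).differentiableAt) (fun x => (hg x).differentiableAt)
    (fun x => by rw [(hf x).hasFDerivAt.fderiv, (hg x).hasFDerivAt.fderiv]) x₀ h

theorem eq_quadratic_of_deriv_deriv_eq_const {f : 𝕜 → 𝕜} {a : 𝕜} (hf : Differentiable 𝕜 f)
    (hf' : Differentiable 𝕜 (deriv f)) (h : ∀ x, deriv (deriv f) x = a)
    (x : 𝕜) : f x = a / 2 * x ^ 2 + deriv f 0 * x + f 0 := by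
  have hlin : deriv f = fun x => a * x + deriv f 0 :=
    eq_of_forall_hasDerivAt (fun x => h x ▸ (hf' x).hasDerivAt)
      (fun x => by simpa using ((hasDerivAt_id x).const_mul a).add_const (deriv f 0)) 0
      (by simp)
  have hquad : f = fun x => a / 2 * x ^ 2 + deriv f 0 * x + f 0 :=
    eq_of_forall_hasDerivAt (fun x => hlin ▸ (hf x).hasDerivAt)
      (fun x => ((((hasDerivAt_pow 2 x).const_mul (a / 2)).add
        ((hasDerivAt_id' x).const_mul (deriv f 0))).add_const (f 0)).congr_deriv (by ring))
      0 (by simp)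
  exact congrFun hquad x

theorem deriv_mul_add_sq_add (A D E : 𝕜) :
    deriv (fun t => A * (t + D) ^ 2 + E) = fun t => 2 * A * (t + D) := by
  funext t
  simp
  ring

end

theorem quadratic_eq_mul_sq_add {A B E : ℝ} (h : B ^ 2 + 1 / 4 = 4 * A * E) (t : ℝ) :
    A * t ^ 2 + B * t + E = A * (t + B / (2 * A)) ^ 2 + 1 / (16 * A) := by
  have hA : A ≠ 0 := by
    rintro rfl
    nlinarith [sq_nonneg B]
  field_simp
  linear_combination (-16) * h

theorem exists_deriv_sq_add_quarter_eq_mul {σ : ℝ → ℝ} (hσ : Differentiable ℝ σ)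
    (hσ' : Differentiable ℝ (deriv σ))
    (hode : ∀ t, -2 * σ t * deriv (deriv σ) t + deriv σ t ^ 2 + 1 / 4 = 0) :
    ∃ c, ∀ t, deriv σ t ^ 2 + 1 / 4 = c * σ t := by
  have hσ0 : ∀ t, σ t ≠ 0 := fun t h0 => by
    have := hode t
    rw [h0] at this
    nlinarith [sq_nonneg (deriv σ t)]
  have hconst : ∀ t, HasDerivAt (fun t => (deriv σ t ^ 2 + 1 / 4) / σ t) 0 t := fun t => by
    refine ((((hσ' t).hasDerivAt.pow 2).add_const (1 / 4)).div (hσ t).hasDerivAt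
      (hσ0 t)).congr_deriv ?_
    rw [Pi.pow_apply, div_eq_zero_iff]
    left
    linear_combination (-deriv σ t) * hode t
  refine ⟨(deriv σ 0 ^ 2 + 1 / 4) / σ 0, fun t => ?_⟩
  rw [← is_const_of_deriv_eq_zero (fun t => (hconst t).differentiableAt)
    (fun t => (hconst t).deriv) t 0]
  field_simp [hσ0 t]

/-- A twice continuously differentiable `σ : ℝ → ℝ` satisfies
`−2σσ'' + (σ')² + 1/4 = 0` on `ℝ` iff `σ(t) = A(t + D)² + 1/(16A)` for some `A ≠ 0`, `D`. -/
theorem ode_iff_quadratic_form (σ : ℝ → ℝ) (hσ : ContDiff ℝ 2 σ) :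
    (∀ t : ℝ, -2 * σ t * deriv (deriv σ) t + (deriv σ t) ^ 2 + 1 / 4 = 0) ↔
      ∃ A D : ℝ, A ≠ 0 ∧ ∀ t : ℝ, σ t = A * (t + D) ^ 2 + 1 / (16 * A) := by
  constructor
  · intro hode
    have hd : Differentiable ℝ σ := hσ.differentiable (by norm_num)
    have hd' : Differentiable ℝ (deriv σ) := hσ.differentiable_deriv_two
    obtain ⟨c, hc⟩ := exists_deriv_sq_add_quarter_eq_mul hd hd' hode
    have hcσ_pos : ∀ t, 0 < c * σ t := fun t => by rw [← hc t]; positivity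
    have hc0 : c ≠ 0 := by rintro rfl; simpa using hcσ_pos 0
    have hσ'' : ∀ t, deriv (deriv σ) t = c / 2 := fun t => by
      have hσ0 : σ t ≠ 0 := by rintro h0; simpa [h0] using hcσ_pos t
      have : σ t * (2 * deriv (deriv σ) t - c) = 0 := by linear_combination -(hode t) + hc t
      linarith [(mul_eq_zero.mp this).resolve_left hσ0]
    refine ⟨c / 4, deriv σ 0 / (2 * (c / 4)), by positivity, fun t => ?_⟩
    rw [eq_quadratic_of_deriv_deriv_eq_const hd hd' hσ'' t,
      ← quadratic_eq_mul_sq_add (E := σ 0) (by linear_combination hc 0)]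
    ring
  · rintro ⟨A, D, hA, hform⟩
    obtain rfl : σ = fun t => A * (t + D) ^ 2 + 1 / (16 * A) := funext hform
    intro t
    simp only [deriv_mul_add_sq_add, deriv_const_mul_field', deriv_add_const', deriv_id'', mul_one]
    field_simp
    ring
end

section
/- Let σ : ℝ → ℝ be twice continuously differentiable and satisfy −2·σ(t)·σ''(t) + σ'(t)² + 1/4 = 0 for all t ∈ ℝ. Then σ(t) ≠ 0 for every t ∈ ℝ, σ is infinitely differentiable, and its third derivative vanishes identically on ℝ. -/
/-- A `C²` solution of `−2σσ'' + (σ')² + 1/4 = 0` on `ℝ` is nowhere zero, is smooth,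
and its third derivative vanishes identically. -/
theorem ode_solution_properties (σ : ℝ → ℝ) (hσ : ContDiff ℝ 2 σ)
    (h : ∀ t : ℝ, -2 * σ t * deriv (deriv σ) t + (deriv σ t) ^ 2 + 1 / 4 = 0) :
    (∀ t : ℝ, σ t ≠ 0) ∧ ContDiff ℝ (⊤ : ℕ∞) σ ∧ ∀ t : ℝ, deriv (deriv (deriv σ)) t = 0 := by
  have h0 : ∀ t : ℝ, σ t ≠ 0 := by
    intro t ht
    have := h t
    rw [ht] at this
    nlinarith [sq_nonneg (deriv σ t)]
  have hkey : deriv (deriv σ) = fun t => ((deriv σ t) ^ 2 + 1 / 4) / (2 * σ t) := by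
    funext t
    have ht := h t
    have h2 : (2 : ℝ) * σ t ≠ 0 := mul_ne_zero two_ne_zero (h0 t)
    field_simp [h0 t]
    linarith
  -- σ is C³
  have hC3 : ContDiff ℝ (((1 : ℕ) : ℕ∞) + 1 + 1) σ := by
    have hd : Differentiable ℝ σ := hσ.differentiable (by simp)
    have hσ2 : ContDiff ℝ (((1 : ℕ) : ℕ∞) + 1) σ := by exact_mod_cast hσ
    have hd1 : ContDiff ℝ (((1 : ℕ) : ℕ∞)) (deriv σ) :=
      (contDiff_succ_iff_deriv.mp hσ2).2.2
    have hd2 : ContDiff ℝ (((1 : ℕ) : ℕ∞)) (deriv (deriv σ)) := by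
      rw [hkey]
      exact ((hd1.pow 2).add contDiff_const).div
        (contDiff_const.mul (hσ2.of_le le_self_add))
        (fun t => mul_ne_zero two_ne_zero (h0 t))
    rw [contDiff_succ_iff_deriv]
    refine ⟨hd, by simp, ?_⟩
    rw [contDiff_succ_iff_deriv]
    exact ⟨hd1.differentiable (by simp),
      by simp, hd2⟩
  have hD1 : ContDiff ℝ (((1 : ℕ) : ℕ∞) + 1) (deriv σ) :=
    (contDiff_succ_iff_deriv.mp hC3).2.2
  have hD2 : ContDiff ℝ (((1 : ℕ) : ℕ∞)) (deriv (deriv σ)) :=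
    (contDiff_succ_iff_deriv.mp hD1).2.2
  have hdiff1 : Differentiable ℝ σ := hσ.differentiable (by simp)
  have hdiff2 : Differentiable ℝ (deriv σ) := hD1.differentiable (by simp)
  have hdiff3 : Differentiable ℝ (deriv (deriv σ)) :=
    hD2.differentiable (by simp)
  -- third derivative vanishes
  have hthird : ∀ t : ℝ, deriv (deriv (deriv σ)) t = 0 := by
    intro t
    have H1 : HasDerivAt σ (deriv σ t) t := (hdiff1 t).hasDerivAt
    have H2 : HasDerivAt (deriv σ) (deriv (deriv σ) t) t := (hdiff2 t).hasDerivAt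
    have H3 : HasDerivAt (deriv (deriv σ)) (deriv (deriv (deriv σ)) t) t :=
      (hdiff3 t).hasDerivAt
    have H : HasDerivAt (fun t => -2 * σ t * deriv (deriv σ) t + (deriv σ t) ^ 2 + 1 / 4)
        ((-2 * deriv σ t) * deriv (deriv σ) t + (-2 * σ t) * deriv (deriv (deriv σ)) t
          + 2 * deriv σ t ^ 1 * deriv (deriv σ) t) t := by
      have := (((H1.const_mul (-2 : ℝ)).mul H3).add (H2.pow 2)).add_const (1 / 4 : ℝ)
      exact this.congr_deriv (by norm_num)
    have Hconst : (fun t : ℝ => -2 * σ t * deriv (deriv σ) t + (deriv σ t) ^ 2 + 1 / 4)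
        = fun _ => (0 : ℝ) := funext h
    rw [Hconst] at H
    have huniq := H.unique (hasDerivAt_const t 0)
    have hσt := h0 t
    have hz : σ t * deriv (deriv (deriv σ)) t = 0 := by nlinarith [huniq]
    rcases mul_eq_zero.mp hz with h' | h'
    · exact absurd h' hσt
    · exact h'
  -- σ'' is constant
  have hA : ∀ t : ℝ, deriv (deriv σ) t = deriv (deriv σ) 0 := fun t =>
    is_const_of_deriv_eq_zero hdiff3 hthird t 0
  set a := deriv (deriv σ) 0 with ha
  -- σ' is linear
  have hB : ∀ t : ℝ, deriv σ t = deriv σ 0 + a * t := by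
    have hF : ∀ t : ℝ, deriv (fun s => deriv σ s - a * s) t = 0 := by
      intro t
      have : HasDerivAt (fun s => deriv σ s - a * s) (deriv (deriv σ) t - a * 1) t :=
        (hdiff2 t).hasDerivAt.sub ((hasDerivAt_id t).const_mul a)
      rw [this.deriv, hA t]; ring
    intro t
    have := is_const_of_deriv_eq_zero
      (fun t => ((hdiff2 t).hasDerivAt.sub ((hasDerivAt_id t).const_mul a)).differentiableAt)
      hF t 0
    simp only [Pi.sub_apply, id_eq, mul_zero, sub_zero] at this
    linarith
  -- σ is quadratic
  have hC : ∀ t : ℝ, σ t = σ 0 + deriv σ 0 * t + a / 2 * t ^ 2 := by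
    have hG : ∀ t : ℝ, HasDerivAt (fun s => σ s - (deriv σ 0 * s + a / 2 * s ^ 2))
        (deriv σ t - (deriv σ 0 * 1 + a / 2 * (2 * t ^ 1))) t := by
      intro t
      exact (hdiff1 t).hasDerivAt.sub
        (((hasDerivAt_id t).const_mul (deriv σ 0)).add ((hasDerivAt_pow 2 t).const_mul (a / 2)))
    have hF : ∀ t : ℝ, deriv (fun s => σ s - (deriv σ 0 * s + a / 2 * s ^ 2)) t = 0 := by
      intro t
      rw [(hG t).deriv, hB t]; ring
    intro t
    have := is_const_of_deriv_eq_zero (fun t => (hG t).differentiableAt) hF t 0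
    norm_num at this
    nlinarith [this]
  have hσeq : σ = fun t : ℝ => σ 0 + deriv σ 0 * t + a / 2 * t ^ 2 := funext hC
  have hω : ContDiff ℝ (⊤ : ℕ∞) σ := by
    rw [hσeq]
    exact (contDiff_const.add (contDiff_const.mul contDiff_id)).add
      (contDiff_const.mul (contDiff_id.pow 2))
  exact ⟨h0, hω, hthird⟩
end

section
/- Let p ≠ 0 be a real number and define σ : ℝ → ℝ by σ(r) ≔ −(r² + p²)/(4p) (so σ is nowhere zero). Then for all real numbers k₁ and k₂, the function β(r) ≔ k₁·(p² − r²)/(r² + p²) + k₂·r/(r² + p²) satisfies the linear ordinary differential equation σ(r)·β''(r) + σ'(r)·β'(r) + β(r)/(4·σ(r)) = 0 for all r ∈ ℝ. -/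
/-!
Once `σ'`, `β'` and `β''` are computed in closed form (all with denominators powers of
`r² + p²`), the equation is a polynomial identity. The reason it holds: under `r = p tan(θ/2)`
one has `dθ/dr = -1/(2σ)`, the equation becomes `d²β/dθ² + β = 0`, and
`β = k₁ cos θ + (k₂/2p) sin θ`.
-/

/-- The function `σ(r) = −(r² + p²)/(4p)` (with `p ≠ 0`). -/
noncomputable def sigmaFun (p : ℝ) : ℝ → ℝ := fun r => -(r ^ 2 + p ^ 2) / (4 * p)

noncomputable def betaFun (p k₁ k₂ r : ℝ) : ℝ :=
  k₁ * (p ^ 2 - r ^ 2) / (r ^ 2 + p ^ 2) + k₂ * r / (r ^ 2 + p ^ 2)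

lemma hasDerivAt_sigmaFun (p r : ℝ) : HasDerivAt (sigmaFun p) (-r / (2 * p)) r :=
  (((hasDerivAt_pow 2 r).add_const (p ^ 2)).fun_neg.div_const (4 * p)).congr_deriv (by ring)

section

variable {p : ℝ} (hp : p ≠ 0) (k₁ k₂ : ℝ)
include hp

lemma hasDerivAt_betaFun (r : ℝ) :
    HasDerivAt (betaFun p k₁ k₂)
      ((k₂ * (p ^ 2 - r ^ 2) - 4 * p ^ 2 * k₁ * r) / (r ^ 2 + p ^ 2) ^ 2) r := by
  have hD : r ^ 2 + p ^ 2 ≠ 0 := by positivity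
  have hD' := (hasDerivAt_pow 2 r).add_const (p ^ 2)
  refine ((((hasDerivAt_pow 2 r).const_sub (p ^ 2)).const_mul k₁).fun_div hD' hD).fun_add
    (((hasDerivAt_id' r).const_mul k₂).fun_div hD' hD) |>.congr_deriv ?_
  field_simp
  ring

lemma deriv_betaFun :
    deriv (betaFun p k₁ k₂) =
      fun r => (k₂ * (p ^ 2 - r ^ 2) - 4 * p ^ 2 * k₁ * r) / (r ^ 2 + p ^ 2) ^ 2 :=
  funext fun r => (hasDerivAt_betaFun hp k₁ k₂ r).deriv

lemma hasDerivAt_deriv_betaFun (r : ℝ) :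
    HasDerivAt (deriv (betaFun p k₁ k₂))
      ((2 * k₂ * r * (r ^ 2 - 3 * p ^ 2) - 4 * p ^ 2 * k₁ * (p ^ 2 - 3 * r ^ 2)) /
        (r ^ 2 + p ^ 2) ^ 3) r := by
  have hD : r ^ 2 + p ^ 2 ≠ 0 := by positivity
  have hD' := ((hasDerivAt_pow 2 r).add_const (p ^ 2)).fun_pow 2
  rw [deriv_betaFun hp]
  refine ((((hasDerivAt_pow 2 r).const_sub (p ^ 2)).const_mul k₂).fun_sub
    ((hasDerivAt_id' r).const_mul (4 * p ^ 2 * k₁))).fun_div hD' (pow_ne_zero 2 hD)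
    |>.congr_deriv ?_
  field_simp
  ring

end

/-- For every `k₁, k₂`, the function `β(r) = k₁(p² − r²)/(r² + p²) + k₂ r/(r² + p²)`
solves `σβ'' + σ'β' + β/(4σ) = 0` with `σ(r) = −(r² + p²)/(4p)`. -/
theorem beta_solves_ode (p : ℝ) (hp : p ≠ 0) (k₁ k₂ : ℝ) :
    letI β : ℝ → ℝ := fun r => k₁ * (p ^ 2 - r ^ 2) / (r ^ 2 + p ^ 2) + k₂ * r / (r ^ 2 + p ^ 2)
    ∀ r : ℝ, sigmaFun p r * deriv (deriv β) r + deriv (sigmaFun p) r * deriv β r +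
      β r / (4 * sigmaFun p r) = 0 := by
  intro r
  change sigmaFun p r * deriv (deriv (betaFun p k₁ k₂)) r +
    deriv (sigmaFun p) r * deriv (betaFun p k₁ k₂) r + betaFun p k₁ k₂ r / (4 * sigmaFun p r) = 0
  rw [(hasDerivAt_deriv_betaFun hp k₁ k₂ r).deriv, (hasDerivAt_sigmaFun p r).deriv,
    deriv_betaFun hp]
  have hD : r ^ 2 + p ^ 2 ≠ 0 := by positivity
  simp only [sigmaFun, betaFun]
  field_simp
  ring
end

section
/- Let V ⊆ ℝ² be open, B ≠ 0 a real constant, and φ : V → ℝ a four times continuously differentiable function with φ(x,y) ≠ 0 and Δφ(x,y) ≠ 0 for all (x,y) ∈ V. Set λ ≔ Δφ and R ≔ −(1/2)·(Δλ/λ − (λ_x² + λ_y²)/λ²), and define σ : V × ℝ → ℝ by σ(x,y,r) ≔ −r²/(4·B·φ(x,y)) − B·φ(x,y)/4. Then for each fixed (x,y) ∈ V the following are equivalent: (i) for every r ∈ ℝ one has σ²·R − (1/2)·σ_xx·σ + (1/2)·σ_x² − (1/2)·σ_yy·σ + (1/2)·σ_y² − (B/4)·λ·σ − B·λ·σ²·σ_rr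 − (B²/2)·σ·σ_rr·(φ_x² + φ_y²) + (B/2)·σ_y·φ_y + (B/2)·σ_x·φ_x + (B²/8)·(φ_x² + φ_y²) = 0 at (x,y,r); (ii) R − (φ_x² + φ_y²)/(2·φ²) + λ/φ = 0 at (x,y). -/
/-- Partial derivative in `x` of a function of two real variables. -/
noncomputable def pdx (f : ℝ × ℝ → ℝ) (p : ℝ × ℝ) : ℝ := fderiv ℝ f p (1, 0)

/-- Partial derivative in `y` of a function of two real variables. -/
noncomputable def pdy (f : ℝ × ℝ → ℝ) (p : ℝ × ℝ) : ℝ := fderiv ℝ f p (0, 1)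

/-- Laplacian of a function of two real variables. -/
noncomputable def lap (f : ℝ × ℝ → ℝ) (p : ℝ × ℝ) : ℝ := pdx (pdx f) p + pdy (pdy f) p

/-- Partial derivative in `x` of a function of three real variables `(x, y, r)`. -/
noncomputable def pX (f : ℝ × ℝ × ℝ → ℝ) (q : ℝ × ℝ × ℝ) : ℝ :=
  fderiv ℝ f q ((1, 0, 0) : ℝ × ℝ × ℝ)

/-- Partial derivative in `y` of a function of three real variables `(x, y, r)`. -/
noncomputable def pY (f : ℝ × ℝ × ℝ → ℝ) (q : ℝ × ℝ × ℝ) : ℝ :=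
  fderiv ℝ f q ((0, 1, 0) : ℝ × ℝ × ℝ)

/-- Partial derivative in `r` of a function of three real variables `(x, y, r)`. -/
noncomputable def pR (f : ℝ × ℝ × ℝ → ℝ) (q : ℝ × ℝ × ℝ) : ℝ :=
  fderiv ℝ f q ((0, 0, 1) : ℝ × ℝ × ℝ)

/-!
The function `σ = -(r² + B²φ²) / (4Bφ)` separates as `φ⁻¹ · (-r²/(4B)) + φ · (-B/4)`, so each
of its partial derivatives is explicit in `φ` and its derivatives at `(x, y)`. Substituting them,
the left-hand side of the polynomial equation factors as `σ² · (R - |∇φ|²/(2φ²) + Δφ/φ)`, and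
`σ(x, y, 0) = -Bφ/4 ≠ 0`.
-/

open Filter Topology

section RealValued

variable {E : Type*} [NormedAddCommGroup E] [NormedSpace ℝ E] {f : E → ℝ} {x : E}

lemma hasFDerivAt_inv_comp {f' : E →L[ℝ] ℝ} (hf : HasFDerivAt f f' x) (h0 : f x ≠ 0) :
    HasFDerivAt f⁻¹ (-(f x ^ 2)⁻¹ • f') x :=
  ((hasDerivAt_inv h0).comp_hasFDerivAt x hf).congr_fderiv (by ext; simp)

lemma fderiv_inv_apply (hf : DifferentiableAt ℝ f x) (h0 : f x ≠ 0) (v : E) :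
    fderiv ℝ f⁻¹ x v = -fderiv ℝ f x v / f x ^ 2 := by
  rw [(hasFDerivAt_inv_comp hf.hasFDerivAt h0).fderiv]
  simp [div_eq_inv_mul]

lemma ContDiffAt.eventually_differentiableAt (hf : ContDiffAt ℝ 1 f x) :
    ∀ᶠ y in 𝓝 x, DifferentiableAt ℝ f y :=
  (hf.eventually (by simp)).mono fun _ hy => hy.differentiableAt (by simp)

lemma ContDiffAt.differentiableAt_fderiv_apply (hf : ContDiffAt ℝ 2 f x) (v : E) :
    DifferentiableAt ℝ (fun y => fderiv ℝ f y v) x :=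
  ((hf.fderiv_right (m := 1) (by norm_num)).clm_apply contDiffAt_const).differentiableAt (by simp)

lemma fderiv_fderiv_inv_apply (hf : ContDiffAt ℝ 2 f x) (h0 : f x ≠ 0) (v : E) :
    fderiv ℝ (fun y => fderiv ℝ f⁻¹ y v) x v =
      2 * fderiv ℝ f x v ^ 2 / f x ^ 3 - fderiv ℝ (fun y => fderiv ℝ f y v) x v / f x ^ 2 := by
  have hnear : (fun y => fderiv ℝ f⁻¹ y v) =ᶠ[𝓝 x]
      fun y => -fderiv ℝ f y v * (f y ^ 2)⁻¹ := by
    filter_upwards [hf.eventually (by simp), hf.continuousAt.eventually_ne h0] with y hy hy0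
    rw [fderiv_inv_apply (hy.differentiableAt (by simp)) hy0, div_eq_mul_inv]
  have hf1 := (hf.differentiableAt (by simp)).hasFDerivAt
  have hquot : HasFDerivAt (fun y => -fderiv ℝ f y v * (f y ^ 2)⁻¹) _ x :=
    (hf.differentiableAt_fderiv_apply v).hasFDerivAt.neg.mul
      (hasFDerivAt_inv_comp (hf1.pow 2) (pow_ne_zero 2 h0))
  rw [hnear.fderiv_eq, hquot.fderiv]
  simp only [Pi.neg_apply, Nat.add_one_sub_one, pow_one, nsmul_eq_mul, Nat.cast_ofNat, neg_smul,
    smul_neg, add_apply, neg_apply, smul_apply, smul_eq_mul, neg_mul, mul_neg, neg_neg]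
  field_simp
  ring

end RealValued

def sepMul (f : ℝ × ℝ → ℝ) (k : ℝ → ℝ) (q : ℝ × ℝ × ℝ) : ℝ := f (q.1, q.2.1) * k q.2.2

section SepMul

variable {f g : ℝ × ℝ → ℝ} {k m : ℝ → ℝ} {q : ℝ × ℝ × ℝ} {w : ℝ × ℝ}

lemma differentiableAt_sepMul (hf : DifferentiableAt ℝ f (q.1, q.2.1))
    (hk : DifferentiableAt ℝ k q.2.2) : DifferentiableAt ℝ (sepMul f k) q :=
  (hf.comp q (by fun_prop)).mul (hk.comp q (by fun_prop))

lemma fderiv_sepMul_apply (hf : DifferentiableAt ℝ f (q.1, q.2.1))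
    (hk : DifferentiableAt ℝ k q.2.2) (v : ℝ × ℝ × ℝ) :
    fderiv ℝ (sepMul f k) q v =
      fderiv ℝ f (q.1, q.2.1) (v.1, v.2.1) * k q.2.2 +
        f (q.1, q.2.1) * (deriv k q.2.2 * v.2.2) := by
  have hπ : HasFDerivAt (fun q : ℝ × ℝ × ℝ => (q.1, q.2.1)) _ q :=
    hasFDerivAt_fst.prodMk (hasFDerivAt_snd (𝕜 := ℝ) (p := q)).fst
  have h : HasFDerivAt (sepMul f k) _ q :=
    (hf.hasFDerivAt.comp q hπ).mul (hk.hasFDerivAt.comp q (hasFDerivAt_snd (𝕜 := ℝ) (p := q)).snd)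
  rw [h.fderiv]
  simp only [add_apply, smul_apply, ContinuousLinearMap.comp_apply, ContinuousLinearMap.coe_snd',
    fderiv_eq_smul_deriv, smul_eq_mul, ContinuousLinearMap.prod_apply, ContinuousLinearMap.coe_fst']
  ring

lemma fderiv_sepMul_add_horizontal (hf : DifferentiableAt ℝ f (q.1, q.2.1))
    (hg : DifferentiableAt ℝ g (q.1, q.2.1)) (hk : DifferentiableAt ℝ k q.2.2)
    (hm : DifferentiableAt ℝ m q.2.2) (w : ℝ × ℝ) :
    fderiv ℝ (sepMul f k + sepMul g m) q (w.1, w.2, 0) =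
      (sepMul (fun p => fderiv ℝ f p w) k + sepMul (fun p => fderiv ℝ g p w) m) q := by
  rw [fderiv_add (differentiableAt_sepMul hf hk) (differentiableAt_sepMul hg hm)]
  simp [fderiv_sepMul_apply, hf, hg, hk, hm, sepMul]

lemma fderiv_sepMul_add_vertical (hf : DifferentiableAt ℝ f (q.1, q.2.1))
    (hg : DifferentiableAt ℝ g (q.1, q.2.1)) (hk : DifferentiableAt ℝ k q.2.2)
    (hm : DifferentiableAt ℝ m q.2.2) :
    fderiv ℝ (sepMul f k + sepMul g m) q (0, 0, 1) =
      (sepMul f (deriv k) + sepMul g (deriv m)) q := by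
  rw [fderiv_add (differentiableAt_sepMul hf hk) (differentiableAt_sepMul hg hm)]
  simp [fderiv_sepMul_apply, hf, hg, hk, hm, sepMul, Prod.mk_zero_zero]

lemma eventually_nhds_of_nhds_xy {P : ℝ × ℝ → Prop} (h : ∀ᶠ p in 𝓝 (q.1, q.2.1), P p) :
    ∀ᶠ q' in 𝓝 q, P (q'.1, q'.2.1) :=
  ((by fun_prop : Continuous fun q : ℝ × ℝ × ℝ => (q.1, q.2.1)).tendsto q).eventually h

lemma fderiv_fderiv_sepMul_add_horizontal
    (hfg : ∀ᶠ p in 𝓝 (q.1, q.2.1), DifferentiableAt ℝ f p ∧ DifferentiableAt ℝ g p)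
    (hf : DifferentiableAt ℝ (fun p => fderiv ℝ f p w) (q.1, q.2.1))
    (hg : DifferentiableAt ℝ (fun p => fderiv ℝ g p w) (q.1, q.2.1))
    (hk : Differentiable ℝ k) (hm : Differentiable ℝ m) :
    fderiv ℝ (fun q' => fderiv ℝ (sepMul f k + sepMul g m) q' (w.1, w.2, 0)) q (w.1, w.2, 0) =
      (sepMul (fun p => fderiv ℝ (fun p' => fderiv ℝ f p' w) p w) k +
        sepMul (fun p => fderiv ℝ (fun p' => fderiv ℝ g p' w) p w) m) q := by
  have hnear : (fun q' => fderiv ℝ (sepMul f k + sepMul g m) q' (w.1, w.2, 0)) =ᶠ[𝓝 q]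
      sepMul (fun p => fderiv ℝ f p w) k + sepMul (fun p => fderiv ℝ g p w) m := by
    filter_upwards [eventually_nhds_of_nhds_xy hfg] with q' ⟨hf', hg'⟩
    exact fderiv_sepMul_add_horizontal hf' hg' (hk _) (hm _) w
  rw [hnear.fderiv_eq]
  exact fderiv_sepMul_add_horizontal hf hg (hk _) (hm _) w

lemma fderiv_fderiv_sepMul_add_vertical
    (hfg : ∀ᶠ p in 𝓝 (q.1, q.2.1), DifferentiableAt ℝ f p ∧ DifferentiableAt ℝ g p)
    (hk : Differentiable ℝ k) (hm : Differentiable ℝ m)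
    (hk' : Differentiable ℝ (deriv k)) (hm' : Differentiable ℝ (deriv m)) :
    fderiv ℝ (fun q' => fderiv ℝ (sepMul f k + sepMul g m) q' (0, 0, 1)) q (0, 0, 1) =
      (sepMul f (deriv (deriv k)) + sepMul g (deriv (deriv m))) q := by
  have hnear : (fun q' => fderiv ℝ (sepMul f k + sepMul g m) q' (0, 0, 1)) =ᶠ[𝓝 q]
      sepMul f (deriv k) + sepMul g (deriv m) := by
    filter_upwards [eventually_nhds_of_nhds_xy hfg] with q' ⟨hf', hg'⟩
    exact fderiv_sepMul_add_vertical hf' hg' (hk _) (hm _)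
  obtain ⟨hf, hg⟩ := hfg.self_of_nhds
  rw [hnear.fderiv_eq]
  exact fderiv_sepMul_add_vertical hf hg (hk' _) (hm' _)

end SepMul

noncomputable def sigma (B : ℝ) (φ : ℝ × ℝ → ℝ) (q : ℝ × ℝ × ℝ) : ℝ :=
  -(q.2.2) ^ 2 / (4 * B * φ (q.1, q.2.1)) - B * φ (q.1, q.2.1) / 4

lemma sigma_eq_sepMul (B : ℝ) (φ : ℝ × ℝ → ℝ) :
    sigma B φ = sepMul φ⁻¹ (fun r => -r ^ 2 / (4 * B)) + sepMul φ (fun _ => -B / 4) := by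
  funext q
  simp only [sigma, sepMul, Pi.add_apply, Pi.inv_apply]
  ring

section Sigma

variable {B : ℝ} {φ : ℝ × ℝ → ℝ} {x y r : ℝ}

lemma fderiv_sigma_horizontal (hφ : DifferentiableAt ℝ φ (x, y)) (h0 : φ (x, y) ≠ 0)
    (w : ℝ × ℝ) :
    fderiv ℝ (sigma B φ) (x, y, r) (w.1, w.2, 0) =
      r ^ 2 * fderiv ℝ φ (x, y) w / (4 * B * φ (x, y) ^ 2) - B * fderiv ℝ φ (x, y) w / 4 := by
  rw [sigma_eq_sepMul, fderiv_sepMul_add_horizontal (hφ.inv h0) hφ (by fun_prop) (by fun_prop)]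
  simp only [sepMul, Pi.add_apply, fderiv_inv_apply hφ h0]
  ring

lemma fderiv_fderiv_sigma_horizontal (hφ : ContDiffAt ℝ 2 φ (x, y)) (h0 : φ (x, y) ≠ 0)
    (w : ℝ × ℝ) :
    fderiv ℝ (fun q => fderiv ℝ (sigma B φ) q (w.1, w.2, 0)) (x, y, r) (w.1, w.2, 0) =
      r ^ 2 * fderiv ℝ (fun p => fderiv ℝ φ p w) (x, y) w / (4 * B * φ (x, y) ^ 2)
        - r ^ 2 * fderiv ℝ φ (x, y) w ^ 2 / (2 * B * φ (x, y) ^ 3)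
        - B * fderiv ℝ (fun p => fderiv ℝ φ p w) (x, y) w / 4 := by
  have hnear : ∀ᶠ p in 𝓝 (x, y), DifferentiableAt ℝ φ⁻¹ p ∧ DifferentiableAt ℝ φ p :=
    ((hφ.of_le (by norm_num)).eventually_differentiableAt.and
      (hφ.continuousAt.eventually_ne h0)).mono fun p ⟨hp, hp0⟩ => ⟨hp.inv hp0, hp⟩
  rw [sigma_eq_sepMul, fderiv_fderiv_sepMul_add_horizontal hnear
    ((hφ.inv h0).differentiableAt_fderiv_apply w) (hφ.differentiableAt_fderiv_apply w)
    (by fun_prop) (by fun_prop)]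
  simp only [sepMul, Pi.add_apply, fderiv_fderiv_inv_apply hφ h0]
  field_simp
  ring

lemma fderiv_fderiv_sigma_vertical (hφ : ContDiffAt ℝ 1 φ (x, y)) (h0 : φ (x, y) ≠ 0) :
    fderiv ℝ (fun q => fderiv ℝ (sigma B φ) q (0, 0, 1)) (x, y, r) (0, 0, 1) =
      -1 / (2 * B * φ (x, y)) := by
  have hnear : ∀ᶠ p in 𝓝 (x, y), DifferentiableAt ℝ φ⁻¹ p ∧ DifferentiableAt ℝ φ p :=
    (hφ.eventually_differentiableAt.and (hφ.continuousAt.eventually_ne h0)).mono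
      fun p ⟨hp, hp0⟩ => ⟨hp.inv hp0, hp⟩
  have hκ : deriv (fun r : ℝ => -r ^ 2 / (4 * B)) = fun r => -(2 * r) / (4 * B) := by
    funext r
    simp
  rw [sigma_eq_sepMul, fderiv_fderiv_sepMul_add_vertical hnear (by fun_prop) (by fun_prop)
    (by rw [hκ]; fun_prop) (by simp)]
  simp only [hκ, deriv_const', Pi.add_apply, sepMul, Pi.inv_apply, deriv_div_const,
    deriv.fun_neg', deriv_const_mul_id', mul_zero, add_zero]
  ring

lemma pX_sigma (hφ : DifferentiableAt ℝ φ (x, y)) (h0 : φ (x, y) ≠ 0) :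
    pX (sigma B φ) (x, y, r) =
      r ^ 2 * pdx φ (x, y) / (4 * B * φ (x, y) ^ 2) - B * pdx φ (x, y) / 4 :=
  fderiv_sigma_horizontal hφ h0 (1, 0)

lemma pY_sigma (hφ : DifferentiableAt ℝ φ (x, y)) (h0 : φ (x, y) ≠ 0) :
    pY (sigma B φ) (x, y, r) =
      r ^ 2 * pdy φ (x, y) / (4 * B * φ (x, y) ^ 2) - B * pdy φ (x, y) / 4 :=
  fderiv_sigma_horizontal hφ h0 (0, 1)

lemma pX_pX_sigma (hφ : ContDiffAt ℝ 2 φ (x, y)) (h0 : φ (x, y) ≠ 0) :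
    pX (pX (sigma B φ)) (x, y, r) =
      r ^ 2 * pdx (pdx φ) (x, y) / (4 * B * φ (x, y) ^ 2)
        - r ^ 2 * pdx φ (x, y) ^ 2 / (2 * B * φ (x, y) ^ 3) - B * pdx (pdx φ) (x, y) / 4 :=
  fderiv_fderiv_sigma_horizontal hφ h0 (1, 0)

lemma pY_pY_sigma (hφ : ContDiffAt ℝ 2 φ (x, y)) (h0 : φ (x, y) ≠ 0) :
    pY (pY (sigma B φ)) (x, y, r) =
      r ^ 2 * pdy (pdy φ) (x, y) / (4 * B * φ (x, y) ^ 2)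
        - r ^ 2 * pdy φ (x, y) ^ 2 / (2 * B * φ (x, y) ^ 3) - B * pdy (pdy φ) (x, y) / 4 :=
  fderiv_fderiv_sigma_horizontal hφ h0 (0, 1)

lemma pR_pR_sigma (hφ : ContDiffAt ℝ 1 φ (x, y)) (h0 : φ (x, y) ≠ 0) :
    pR (pR (sigma B φ)) (x, y, r) = -1 / (2 * B * φ (x, y)) :=
  fderiv_fderiv_sigma_vertical hφ h0

end Sigma

lemma ricci_poly_eq_sq_mul {B a ax ay axx ayy L R r s sx sy sxx syy srr : ℝ} (hB : B ≠ 0)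
    (ha : a ≠ 0) (hs : s = -r ^ 2 / (4 * B * a) - B * a / 4)
    (hsx : sx = r ^ 2 * ax / (4 * B * a ^ 2) - B * ax / 4)
    (hsy : sy = r ^ 2 * ay / (4 * B * a ^ 2) - B * ay / 4)
    (hsxx : sxx = r ^ 2 * axx / (4 * B * a ^ 2) - r ^ 2 * ax ^ 2 / (2 * B * a ^ 3) - B * axx / 4)
    (hsyy : syy = r ^ 2 * ayy / (4 * B * a ^ 2) - r ^ 2 * ay ^ 2 / (2 * B * a ^ 3) - B * ayy / 4)
    (hsrr : srr = -1 / (2 * B * a)) (hL : L = axx + ayy) :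
    s ^ 2 * R - (1 / 2) * sxx * s + (1 / 2) * sx ^ 2 - (1 / 2) * syy * s + (1 / 2) * sy ^ 2 -
        (B / 4) * L * s - B * L * s ^ 2 * srr - (B ^ 2 / 2) * s * srr * (ax ^ 2 + ay ^ 2) +
        (B / 2) * sy * ay + (B / 2) * sx * ax + (B ^ 2 / 8) * (ax ^ 2 + ay ^ 2) =
      s ^ 2 * (R - (ax ^ 2 + ay ^ 2) / (2 * a ^ 2) + L / a) := by
  subst hs hsx hsy hsxx hsyy hsrr hL
  field_simp
  ring

lemma forall_sq_mul_eq_zero_iff {s : ℝ → ℝ} {E r₀ : ℝ} (hs : s r₀ ≠ 0) :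
    (∀ r, s r ^ 2 * E = 0) ↔ E = 0 :=
  ⟨fun h => (mul_eq_zero.mp (h r₀)).resolve_left (pow_ne_zero 2 hs), fun h r => by simp [h]⟩

theorem poly_ricci_equation_iff_general
    (V : Set (ℝ × ℝ)) (hV : IsOpen V) (B : ℝ) (hB : B ≠ 0)
    (φ : ℝ × ℝ → ℝ) (hφ : ContDiffOn ℝ 4 φ V)
    (hφ0 : ∀ p ∈ V, φ p ≠ 0) :
    ∀ p ∈ V,
      letI lam : ℝ × ℝ → ℝ := lap φ
      letI R : ℝ :=
        -(1 / 2) * (lap lam p / lam p - ((pdx lam p) ^ 2 + (pdy lam p) ^ 2) / (lam p) ^ 2)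
      letI σ : ℝ × ℝ × ℝ → ℝ := fun q =>
        -(q.2.2) ^ 2 / (4 * B * φ (q.1, q.2.1)) - B * φ (q.1, q.2.1) / 4
      ((∀ r : ℝ,
          letI q : ℝ × ℝ × ℝ := (p.1, p.2, r)
          (σ q) ^ 2 * R - (1 / 2) * pX (pX σ) q * σ q + (1 / 2) * (pX σ q) ^ 2 -
              (1 / 2) * pY (pY σ) q * σ q + (1 / 2) * (pY σ q) ^ 2 -
              (B / 4) * lam p * σ q - B * lam p * (σ q) ^ 2 * pR (pR σ) q -
              (B ^ 2 / 2) * σ q * pR (pR σ) q * ((pdx φ p) ^ 2 + (pdy φ p) ^ 2) +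
              (B / 2) * pY σ q * pdy φ p + (B / 2) * pX σ q * pdx φ p +
              (B ^ 2 / 8) * ((pdx φ p) ^ 2 + (pdy φ p) ^ 2) = 0) ↔
        R - ((pdx φ p) ^ 2 + (pdy φ p) ^ 2) / (2 * (φ p) ^ 2) + lam p / φ p = 0) := by
  rintro ⟨x, y⟩ hp
  have hφp : ContDiffAt ℝ 2 φ (x, y) := (hφ.contDiffAt (hV.mem_nhds hp)).of_le (by norm_num)
  have h0 := hφ0 _ hp
  have hσ : (fun q : ℝ × ℝ × ℝ => -(q.2.2) ^ 2 / (4 * B * φ (q.1, q.2.1)) - B * φ (q.1, q.2.1) / 4)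
      = sigma B φ := rfl
  have hfactor := fun r R => ricci_poly_eq_sq_mul (R := R) (s := sigma B φ (x, y, r)) hB h0 rfl
    (pX_sigma (hφp.differentiableAt (by simp)) h0) (pY_sigma (hφp.differentiableAt (by simp)) h0)
    (pX_pX_sigma hφp h0) (pY_pY_sigma hφp h0) (pR_pR_sigma (r := r) (hφp.of_le (by norm_num)) h0)
    (show lap φ (x, y) = _ from rfl)
  rw [hσ]
  simp only [hfactor]
  exact forall_sq_mul_eq_zero_iff (r₀ := 0) (by simp [sigma, hB, h0])

/-- With `λ = Δφ`, `R = −(1/2)(Δλ/λ − (λ_x² + λ_y²)/λ²)` and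
`σ(x,y,r) = −r²/(4Bφ) − Bφ/4`, the fourth-order polynomial equation in `r` obtained from
the Ricci conditions holds for all `r` iff `R − (φ_x² + φ_y²)/(2φ²) + Δφ/φ = 0`. -/
theorem poly_ricci_equation_iff
    (V : Set (ℝ × ℝ)) (hV : IsOpen V) (B : ℝ) (hB : B ≠ 0)
    (φ : ℝ × ℝ → ℝ) (hφ : ContDiffOn ℝ 4 φ V)
    (hφ0 : ∀ p ∈ V, φ p ≠ 0) (hlam0 : ∀ p ∈ V, lap φ p ≠ 0) :
    ∀ p ∈ V,
      letI lam : ℝ × ℝ → ℝ := lap φ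
      letI R : ℝ :=
        -(1 / 2) * (lap lam p / lam p - ((pdx lam p) ^ 2 + (pdy lam p) ^ 2) / (lam p) ^ 2)
      letI σ : ℝ × ℝ × ℝ → ℝ := fun q =>
        -(q.2.2) ^ 2 / (4 * B * φ (q.1, q.2.1)) - B * φ (q.1, q.2.1) / 4
      ((∀ r : ℝ,
          letI q : ℝ × ℝ × ℝ := (p.1, p.2, r)
          (σ q) ^ 2 * R - (1 / 2) * pX (pX σ) q * σ q + (1 / 2) * (pX σ q) ^ 2 -
              (1 / 2) * pY (pY σ) q * σ q + (1 / 2) * (pY σ q) ^ 2 -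
              (B / 4) * lam p * σ q - B * lam p * (σ q) ^ 2 * pR (pR σ) q -
              (B ^ 2 / 2) * σ q * pR (pR σ) q * ((pdx φ p) ^ 2 + (pdy φ p) ^ 2) +
              (B / 2) * pY σ q * pdy φ p + (B / 2) * pX σ q * pdx φ p +
              (B ^ 2 / 8) * ((pdx φ p) ^ 2 + (pdy φ p) ^ 2) = 0) ↔
        R - ((pdx φ p) ^ 2 + (pdy φ p) ^ 2) / (2 * (φ p) ^ 2) + lam p / φ p = 0) :=
  poly_ricci_equation_iff_general V hV B hB φ hφ hφ0
end

section
/- Let V ⊆ ℝ² be open, B a real number, and φ, k : V → ℝ differentiable functions. Suppose that for all (x,y) ∈ V and all r ∈ ℝ the following two identities hold: B·k·φ·(B+1)·(B·φ − r)·(B·φ + r)·φ_x + 5·r·(B+1)·k·(B²·φ² − r²/5)·φ_y + ((B²·φ² − r²)·k_x − 2·B·r·φ·k_y)·(B²·φ² + r²) = 0, and B·k·φ·(B+1)·(B·φ − r)·(B·φ + r)·φ_y − 5·(B+1)·k·r·(B²·φ² − r²/5)·φ_x + (k_y·(B²·φ² − r²) + 2·B·r·φ·k_x)·(B²·φ²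 + r²) = 0. Then k_x = k_y = 0 at every point of V; and if moreover there exists a point of V at which k ≠ 0 and (φ_x, φ_y) ≠ (0,0), then B = −1. -/
/-- If the two polynomial identities (in `r`) coming from the Ricci conditions
`Ric(Ê_i, q₀) = 0` hold on `V`, then `k` is locally constant on `V` (`k_x = k_y = 0`),
and if at some point `k ≠ 0` and `dφ ≠ 0`, then `B = −1`. -/
theorem kerr_family_forces_B_eq_neg_one
    (V : Set (ℝ × ℝ)) (hV : IsOpen V) (B : ℝ)
    (φ k : ℝ × ℝ → ℝ)
    (hφ : ∀ p ∈ V, DifferentiableAt ℝ φ p)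
    (hk : ∀ p ∈ V, DifferentiableAt ℝ k p)
    (h1 : ∀ p ∈ V, ∀ r : ℝ,
      B * k p * φ p * (B + 1) * (B * φ p - r) * (B * φ p + r) * pdx φ p +
          5 * r * (B + 1) * k p * (B ^ 2 * (φ p) ^ 2 - r ^ 2 / 5) * pdy φ p +
          ((B ^ 2 * (φ p) ^ 2 - r ^ 2) * pdx k p - 2 * B * r * φ p * pdy k p) *
            (B ^ 2 * (φ p) ^ 2 + r ^ 2) = 0)
    (h2 : ∀ p ∈ V, ∀ r : ℝ,
      B * k p * φ p * (B + 1) * (B * φ p - r) * (B * φ p + r) * pdy φ p -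
          5 * (B + 1) * k p * r * (B ^ 2 * (φ p) ^ 2 - r ^ 2 / 5) * pdx φ p +
          (pdy k p * (B ^ 2 * (φ p) ^ 2 - r ^ 2) + 2 * B * r * φ p * pdx k p) *
            (B ^ 2 * (φ p) ^ 2 + r ^ 2) = 0) :
    (∀ p ∈ V, pdx k p = 0 ∧ pdy k p = 0) ∧
      ((∃ p ∈ V, k p ≠ 0 ∧ ((pdx φ p, pdy φ p) : ℝ × ℝ) ≠ (0, 0)) → B = -1) := by
  have key : ∀ p ∈ V, pdx k p = 0 ∧ pdy k p = 0 := by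
    intro p hp
    constructor
    · linear_combination (-(1:ℝ)/24) * (h1 p hp 2) + (-(1:ℝ)/24) * (h1 p hp (-2)) +
        ((1:ℝ)/6) * (h1 p hp 1) + ((1:ℝ)/6) * (h1 p hp (-1)) + (-(1:ℝ)/4) * (h1 p hp 0)
    · linear_combination (-(1:ℝ)/24) * (h2 p hp 2) + (-(1:ℝ)/24) * (h2 p hp (-2)) +
        ((1:ℝ)/6) * (h2 p hp 1) + ((1:ℝ)/6) * (h2 p hp (-1)) + (-(1:ℝ)/4) * (h2 p hp 0)
  refine ⟨key, ?_⟩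
  rintro ⟨q, hq, hK, hpxy⟩
  obtain ⟨hkx, hky⟩ := key q hq
  have h3 : (B + 1) * k q * pdy φ q = 0 := by
    linear_combination (-(1:ℝ)/12) * (h1 q hq 2) + ((1:ℝ)/12) * (h1 q hq (-2)) +
      ((1:ℝ)/6) * (h1 q hq 1) + (-(1:ℝ)/6) * (h1 q hq (-1)) + (-2 * B * φ q) * hky
  have h4 : (B + 1) * k q * pdx φ q = 0 := by
    linear_combination ((1:ℝ)/12) * (h2 q hq 2) + (-(1:ℝ)/12) * (h2 q hq (-2)) +
      (-(1:ℝ)/6) * (h2 q hq 1) + ((1:ℝ)/6) * (h2 q hq (-1)) + (-2 * B * φ q) * hkx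
  by_contra hB
  have hB1 : B + 1 ≠ 0 := fun h => hB (by linarith)
  apply hpxy
  have hpx : pdx φ q = 0 := by
    rcases mul_eq_zero.1 h4 with h | h
    · rcases mul_eq_zero.1 h with h' | h'
      · exact absurd h' hB1
      · exact absurd h' hK
    · exact h
  have hpy : pdy φ q = 0 := by
    rcases mul_eq_zero.1 h3 with h | h
    · rcases mul_eq_zero.1 h with h' | h'
      · exact absurd h' hB1
      · exact absurd h' hK
    · exact h
  simp [hpx, hpy]
end

section
/- Let V ⊆ ℝ² be a bounded open set whose closure is contained in 𝔻, and let φ₁, φ₂ be real-valued functions that are continuous on the closure of V, twice differentiable on V, and satisfy Δφ + 8·φ/(1 + x² + y²)² = 0 at every point of V. If φ₁ = φ₂ at every point of the topological frontier of V, then φ₁ = φ₂ on the closure of V. -/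
/-!
In stereographic coordinates the equation reads `Δ_{S²} φ + 2φ = 0` on the round sphere, so the
height function `(1 - |p|²) / (1 + |p|²)` solves it and is positive on the disk; its rescaling
`(1 - μ|p|²) / (1 + μ|p|²)` with `μ > 1` close to `1` is a positive strict supersolution `w` on
the closure of `V`. Such a `w` yields a maximum principle for `Δ + c`, `c = 8 / (1 + |p|²)²`: if
the difference `u` of two solutions vanishes on the frontier but is positive somewhere, let
`t > 0` be the maximum of `u / w`; then `u - t w` has an interior local maximum `0` at some `p₀`,
so `Δ(u - t w)(p₀) ≤ 0`, whereas the equations give `Δ(u - t w)(p₀) = -t (Δw + c w)(p₀) > 0`.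
-/

open Filter Set Topology

theorem IsLocalMax.nonpos_of_hasDerivAt_deriv {g h : ℝ → ℝ} {a m : ℝ} (hmax : IsLocalMax g a)
    (hg : ∀ᶠ x in 𝓝 a, HasDerivAt g (h x) x) (hh : HasDerivAt h m a) : m ≤ 0 := by
  -- if `m > 0`, `a` is also a local minimum, so `g` is locally constant and `m = 0`
  by_contra! hm
  have hderiv : deriv g =ᶠ[𝓝 a] h := hg.mono fun x hx => hx.deriv
  have hmin : IsLocalMin g a :=
    isLocalMin_of_deriv_deriv_pos (by rwa [hderiv.deriv_eq, hh.deriv]) hmax.deriv_eq_zero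
      hg.self_of_nhds.continuousAt
  have hconst : g =ᶠ[𝓝 a] fun _ => g a :=
    (hmax.and hmin).mono fun x hx => le_antisymm hx.1 hx.2
  have hzero : h =ᶠ[𝓝 a] fun _ => 0 := by
    refine hderiv.symm.trans (hconst.deriv.trans ?_)
    simp only [deriv_const']
    rfl
  exact hm.ne' (hh.unique ((hasDerivAt_const a 0).congr_of_eventuallyEq hzero))

section Partials

variable {f g : ℝ × ℝ → ℝ} {p : ℝ × ℝ}

theorem hasDerivAt_pdx (hf : DifferentiableAt ℝ f p) :
    HasDerivAt (fun t => f (t, p.2)) (pdx f p) p.1 :=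
  hf.hasFDerivAt.comp_hasDerivAt p.1 ((hasDerivAt_id p.1).prodMk (hasDerivAt_const p.1 p.2))

theorem hasDerivAt_pdy (hf : DifferentiableAt ℝ f p) :
    HasDerivAt (fun t => f (p.1, t)) (pdy f p) p.2 :=
  hf.hasFDerivAt.comp_hasDerivAt p.2 ((hasDerivAt_const p.2 p.1).prodMk (hasDerivAt_id p.2))

theorem pdx_eq_of_hasDerivAt {a : ℝ} (hf : DifferentiableAt ℝ f p)
    (h : HasDerivAt (fun t => f (t, p.2)) a p.1) : pdx f p = a :=
  (hasDerivAt_pdx hf).unique h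

theorem pdy_eq_of_hasDerivAt {a : ℝ} (hf : DifferentiableAt ℝ f p)
    (h : HasDerivAt (fun t => f (p.1, t)) a p.2) : pdy f p = a :=
  (hasDerivAt_pdy hf).unique h

theorem Filter.EventuallyEq.pdx_eq (h : f =ᶠ[𝓝 p] g) : pdx f p = pdx g p := by
  rw [pdx, pdx, h.fderiv_eq]

theorem Filter.EventuallyEq.pdy_eq (h : f =ᶠ[𝓝 p] g) : pdy f p = pdy g p := by
  rw [pdy, pdy, h.fderiv_eq]

theorem pdx_sub (hf : DifferentiableAt ℝ f p) (hg : DifferentiableAt ℝ g p) :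
    pdx (fun q => f q - g q) p = pdx f p - pdx g p := by
  simp [pdx, fderiv_fun_sub hf hg]

theorem pdy_sub (hf : DifferentiableAt ℝ f p) (hg : DifferentiableAt ℝ g p) :
    pdy (fun q => f q - g q) p = pdy f p - pdy g p := by
  simp [pdy, fderiv_fun_sub hf hg]

theorem pdx_const_mul (c : ℝ) (hf : DifferentiableAt ℝ f p) :
    pdx (fun q => c * f q) p = c * pdx f p := by
  simp [pdx, fderiv_const_mul hf c]

theorem pdy_const_mul (c : ℝ) (hf : DifferentiableAt ℝ f p) :
    pdy (fun q => c * f q) p = c * pdy f p := by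
  simp [pdy, fderiv_const_mul hf c]

theorem IsLocalMax.pdx_pdx_nonpos (h : IsLocalMax f p) (hf : ∀ᶠ q in 𝓝 p, DifferentiableAt ℝ f q)
    (hfx : DifferentiableAt ℝ (pdx f) p) : pdx (pdx f) p ≤ 0 :=
  (h.comp_continuous (g := fun t => (t, p.2)) (by fun_prop)).nonpos_of_hasDerivAt_deriv
    ((Continuous.prodMk_left p.2).tendsto p.1 |>.eventually hf |>.mono fun _ => hasDerivAt_pdx)
    (hasDerivAt_pdx hfx)

theorem IsLocalMax.pdy_pdy_nonpos (h : IsLocalMax f p) (hf : ∀ᶠ q in 𝓝 p, DifferentiableAt ℝ f q)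
    (hfy : DifferentiableAt ℝ (pdy f) p) : pdy (pdy f) p ≤ 0 :=
  (h.comp_continuous (g := fun t => (p.1, t)) (by fun_prop)).nonpos_of_hasDerivAt_deriv
    ((Continuous.prodMk_right p.1).tendsto p.2 |>.eventually hf |>.mono fun _ => hasDerivAt_pdy)
    (hasDerivAt_pdy hfy)

end Partials

def TwiceDifferentiableOn (f : ℝ × ℝ → ℝ) (s : Set (ℝ × ℝ)) : Prop :=
  ∀ p ∈ s, DifferentiableAt ℝ f p ∧ DifferentiableAt ℝ (pdx f) p ∧ DifferentiableAt ℝ (pdy f) p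

namespace TwiceDifferentiableOn

variable {f g : ℝ × ℝ → ℝ} {p : ℝ × ℝ} {s : Set (ℝ × ℝ)}

theorem pdx_sub_eventuallyEq (hs : IsOpen s) (hp : p ∈ s) (hf : TwiceDifferentiableOn f s)
    (hg : TwiceDifferentiableOn g s) :
    pdx (fun q => f q - g q) =ᶠ[𝓝 p] fun q => pdx f q - pdx g q :=
  eventually_of_mem (hs.mem_nhds hp) fun q hq => pdx_sub (hf q hq).1 (hg q hq).1

theorem pdy_sub_eventuallyEq (hs : IsOpen s) (hp : p ∈ s) (hf : TwiceDifferentiableOn f s)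
    (hg : TwiceDifferentiableOn g s) :
    pdy (fun q => f q - g q) =ᶠ[𝓝 p] fun q => pdy f q - pdy g q :=
  eventually_of_mem (hs.mem_nhds hp) fun q hq => pdy_sub (hf q hq).1 (hg q hq).1

theorem pdx_const_mul_eventuallyEq (c : ℝ) (hs : IsOpen s) (hp : p ∈ s)
    (hf : TwiceDifferentiableOn f s) : pdx (fun q => c * f q) =ᶠ[𝓝 p] fun q => c * pdx f q :=
  eventually_of_mem (hs.mem_nhds hp) fun q hq => pdx_const_mul c (hf q hq).1

theorem pdy_const_mul_eventuallyEq (c : ℝ) (hs : IsOpen s) (hp : p ∈ s)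
    (hf : TwiceDifferentiableOn f s) : pdy (fun q => c * f q) =ᶠ[𝓝 p] fun q => c * pdy f q :=
  eventually_of_mem (hs.mem_nhds hp) fun q hq => pdy_const_mul c (hf q hq).1

theorem sub (hs : IsOpen s) (hf : TwiceDifferentiableOn f s) (hg : TwiceDifferentiableOn g s) :
    TwiceDifferentiableOn (fun q => f q - g q) s := fun p hp =>
  ⟨(hf p hp).1.sub (hg p hp).1,
    (pdx_sub_eventuallyEq hs hp hf hg).differentiableAt_iff.2 ((hf p hp).2.1.sub (hg p hp).2.1),
    (pdy_sub_eventuallyEq hs hp hf hg).differentiableAt_iff.2 ((hf p hp).2.2.sub (hg p hp).2.2)⟩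

theorem const_mul (c : ℝ) (hs : IsOpen s) (hf : TwiceDifferentiableOn f s) :
    TwiceDifferentiableOn (fun q => c * f q) s := fun p hp =>
  ⟨(hf p hp).1.const_mul c,
    (pdx_const_mul_eventuallyEq c hs hp hf).differentiableAt_iff.2 ((hf p hp).2.1.const_mul c),
    (pdy_const_mul_eventuallyEq c hs hp hf).differentiableAt_iff.2 ((hf p hp).2.2.const_mul c)⟩

theorem lap_sub (hs : IsOpen s) (hp : p ∈ s) (hf : TwiceDifferentiableOn f s)
    (hg : TwiceDifferentiableOn g s) : lap (fun q => f q - g q) p = lap f p - lap g p := by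
  rw [lap, (pdx_sub_eventuallyEq hs hp hf hg).pdx_eq, (pdy_sub_eventuallyEq hs hp hf hg).pdy_eq,
    pdx_sub (hf p hp).2.1 (hg p hp).2.1, pdy_sub (hf p hp).2.2 (hg p hp).2.2, lap, lap]
  ring

theorem lap_const_mul (c : ℝ) (hs : IsOpen s) (hp : p ∈ s) (hf : TwiceDifferentiableOn f s) :
    lap (fun q => c * f q) p = c * lap f p := by
  rw [lap, (pdx_const_mul_eventuallyEq c hs hp hf).pdx_eq,
    (pdy_const_mul_eventuallyEq c hs hp hf).pdy_eq, pdx_const_mul c (hf p hp).2.1,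
    pdy_const_mul c (hf p hp).2.2, lap]
  ring

end TwiceDifferentiableOn

theorem IsLocalMax.lap_nonpos {f : ℝ × ℝ → ℝ} {p : ℝ × ℝ} {s : Set (ℝ × ℝ)}
    (h : IsLocalMax f p) (hs : IsOpen s) (hp : p ∈ s)
    (hf : TwiceDifferentiableOn f s) : lap f p ≤ 0 := by
  have hdiff : ∀ᶠ q in 𝓝 p, DifferentiableAt ℝ f q :=
    eventually_of_mem (hs.mem_nhds hp) fun q hq => (hf q hq).1
  exact add_nonpos (h.pdx_pdx_nonpos hdiff (hf p hp).2.1) (h.pdy_pdy_nonpos hdiff (hf p hp).2.2)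

structure IsPosStrictSupersolution (c w : ℝ × ℝ → ℝ) (V : Set (ℝ × ℝ)) : Prop where
  continuousOn : ContinuousOn w (closure V)
  twiceDifferentiableOn : TwiceDifferentiableOn w V
  pos : ∀ p ∈ closure V, 0 < w p
  lap_add_mul_neg : ∀ p ∈ V, lap w p + c p * w p < 0

section MaximumPrinciple

variable {V : Set (ℝ × ℝ)} {c w : ℝ × ℝ → ℝ}

theorem nonpos_of_isPosStrictSupersolution (hVo : IsOpen V) (hVc : IsCompact (closure V))
    (hw : IsPosStrictSupersolution c w V) {u : ℝ × ℝ → ℝ} (hu : ContinuousOn u (closure V))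
    (hu₂ : TwiceDifferentiableOn u V) (hsub : ∀ p ∈ V, 0 ≤ lap u p + c p * u p)
    (hfr : ∀ p ∈ frontier V, u p ≤ 0) : ∀ p ∈ closure V, u p ≤ 0 := by
  intro q hq
  by_contra! huq
  obtain ⟨p₀, hp₀, hmax⟩ :=
    hVc.exists_isMaxOn ⟨q, hq⟩ (hu.div hw.continuousOn fun p hp => (hw.pos p hp).ne')
  set t := u p₀ / w p₀
  have ht : 0 < t := (div_pos huq (hw.pos q hq)).trans_le (hmax hq)
  have hup₀ : u p₀ = t * w p₀ := (div_mul_cancel₀ _ (hw.pos p₀ hp₀).ne').symm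
  have hHmax : IsMaxOn (fun p => u p - t * w p) (closure V) p₀ := fun p hp => by
    have : u p / w p ≤ t := hmax hp
    rw [div_le_iff₀ (hw.pos p hp)] at this
    show u p - t * w p ≤ u p₀ - t * w p₀
    linarith
  have hp₀V : p₀ ∈ V := by
    by_contra hp₀V
    have := hfr p₀ (hVo.frontier_eq ▸ ⟨hp₀, hp₀V⟩)
    linarith [mul_pos ht (hw.pos p₀ hp₀)]
  have hw₂ := hw.twiceDifferentiableOn
  have hlap : lap u p₀ - t * lap w p₀ ≤ 0 := by
    have := (hHmax.isLocalMax (mem_of_superset (hVo.mem_nhds hp₀V) subset_closure)).lap_nonpos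
      hVo hp₀V (hu₂.sub hVo (hw₂.const_mul t hVo))
    rwa [hu₂.lap_sub hVo hp₀V (hw₂.const_mul t hVo), hw₂.lap_const_mul t hVo hp₀V] at this
  have hsub₀ : 0 ≤ lap u p₀ + c p₀ * (t * w p₀) := hup₀ ▸ hsub p₀ hp₀V
  linarith [mul_neg_of_pos_of_neg ht (hw.lap_add_mul_neg p₀ hp₀V)]

theorem le_of_isPosStrictSupersolution (hVo : IsOpen V) (hVc : IsCompact (closure V))
    (hw : IsPosStrictSupersolution c w V) {φ₁ φ₂ : ℝ × ℝ → ℝ}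
    (hc₁ : ContinuousOn φ₁ (closure V)) (hc₂ : ContinuousOn φ₂ (closure V))
    (hd₁ : TwiceDifferentiableOn φ₁ V) (hd₂ : TwiceDifferentiableOn φ₂ V)
    (hφ : ∀ p ∈ V, lap φ₂ p + c p * φ₂ p ≤ lap φ₁ p + c p * φ₁ p)
    (hbd : ∀ p ∈ frontier V, φ₁ p ≤ φ₂ p) : ∀ p ∈ closure V, φ₁ p ≤ φ₂ p := by
  intro p hp
  refine sub_nonpos.1 (nonpos_of_isPosStrictSupersolution (u := fun q => φ₁ q - φ₂ q) hVo hVc hw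
    (hc₁.sub hc₂) (hd₁.sub hVo hd₂) (fun q hq => ?_) (fun q hq => sub_nonpos.2 (hbd q hq)) p hp)
  rw [hd₁.lap_sub hVo hq hd₂]
  linarith [hφ q hq]

end MaximumPrinciple

section Radial

variable {g g' g'' : ℝ → ℝ}

theorem differentiableAt_radial (hg : ∀ s, 0 ≤ s → HasDerivAt g (g' s) s) (p : ℝ × ℝ) :
    DifferentiableAt ℝ (fun q : ℝ × ℝ => g (q.1 ^ 2 + q.2 ^ 2)) p :=
  (hg _ (by positivity)).differentiableAt.comp p (by fun_prop)

theorem pdx_radial (hg : ∀ s, 0 ≤ s → HasDerivAt g (g' s) s) :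
    pdx (fun q : ℝ × ℝ => g (q.1 ^ 2 + q.2 ^ 2)) = fun q => 2 * q.1 * g' (q.1 ^ 2 + q.2 ^ 2) := by
  funext q
  refine pdx_eq_of_hasDerivAt (differentiableAt_radial hg q) ?_
  have hn : HasDerivAt (fun t => t ^ 2 + q.2 ^ 2) (2 * q.1) q.1 := by
    simpa using (hasDerivAt_pow 2 q.1).add_const (q.2 ^ 2)
  exact ((hg _ (by positivity)).comp q.1 hn).congr_deriv (by ring)

theorem pdy_radial (hg : ∀ s, 0 ≤ s → HasDerivAt g (g' s) s) :
    pdy (fun q : ℝ × ℝ => g (q.1 ^ 2 + q.2 ^ 2)) = fun q => 2 * q.2 * g' (q.1 ^ 2 + q.2 ^ 2) := by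
  funext q
  refine pdy_eq_of_hasDerivAt (differentiableAt_radial hg q) ?_
  have hn : HasDerivAt (fun t => q.1 ^ 2 + t ^ 2) (2 * q.2) q.2 := by
    simpa using (hasDerivAt_pow 2 q.2).const_add (q.1 ^ 2)
  exact ((hg _ (by positivity)).comp q.2 hn).congr_deriv (by ring)

theorem twiceDifferentiableOn_radial (hg : ∀ s, 0 ≤ s → HasDerivAt g (g' s) s)
    (hg' : ∀ s, 0 ≤ s → HasDerivAt g' (g'' s) s) (s : Set (ℝ × ℝ)) :
    TwiceDifferentiableOn (fun q : ℝ × ℝ => g (q.1 ^ 2 + q.2 ^ 2)) s := fun p _ => by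
  refine ⟨differentiableAt_radial hg p, ?_, ?_⟩
  · rw [pdx_radial hg]
    exact DifferentiableAt.mul (by fun_prop) (differentiableAt_radial hg' p)
  · rw [pdy_radial hg]
    exact DifferentiableAt.mul (by fun_prop) (differentiableAt_radial hg' p)

theorem lap_radial (hg : ∀ s, 0 ≤ s → HasDerivAt g (g' s) s)
    (hg' : ∀ s, 0 ≤ s → HasDerivAt g' (g'' s) s) (p : ℝ × ℝ) :
    lap (fun q : ℝ × ℝ => g (q.1 ^ 2 + q.2 ^ 2)) p =
      4 * (g' (p.1 ^ 2 + p.2 ^ 2) + (p.1 ^ 2 + p.2 ^ 2) * g'' (p.1 ^ 2 + p.2 ^ 2)) := by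
  have hx : HasDerivAt (fun t => 2 * t * g' (t ^ 2 + p.2 ^ 2))
      (2 * g' (p.1 ^ 2 + p.2 ^ 2) + 2 * p.1 * (g'' (p.1 ^ 2 + p.2 ^ 2) * (2 * p.1))) p.1 := by
    have hn : HasDerivAt (fun t => t ^ 2 + p.2 ^ 2) (2 * p.1) p.1 := by
      simpa using (hasDerivAt_pow 2 p.1).add_const (p.2 ^ 2)
    exact (((hasDerivAt_id p.1).const_mul 2).fun_mul
      ((hg' _ (by positivity)).comp p.1 hn)).congr_deriv (by simp)
  have hy : HasDerivAt (fun t => 2 * t * g' (p.1 ^ 2 + t ^ 2))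
      (2 * g' (p.1 ^ 2 + p.2 ^ 2) + 2 * p.2 * (g'' (p.1 ^ 2 + p.2 ^ 2) * (2 * p.2))) p.2 := by
    have hn : HasDerivAt (fun t => p.1 ^ 2 + t ^ 2) (2 * p.2) p.2 := by
      simpa using (hasDerivAt_pow 2 p.2).const_add (p.1 ^ 2)
    exact (((hasDerivAt_id p.2).const_mul 2).fun_mul
      ((hg' _ (by positivity)).comp p.2 hn)).congr_deriv (by simp)
  have hdiff := twiceDifferentiableOn_radial hg hg' univ p (mem_univ p)
  rw [lap, pdx_eq_of_hasDerivAt hdiff.2.1 (by rw [pdx_radial hg]; exact hx),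
    pdy_eq_of_hasDerivAt hdiff.2.2 (by rw [pdy_radial hg]; exact hy)]
  ring

end Radial

noncomputable def stereoProfile (μ s : ℝ) : ℝ := (1 - μ * s) / (1 + μ * s)

noncomputable def stereoHeight (μ : ℝ) (p : ℝ × ℝ) : ℝ := stereoProfile μ (p.1 ^ 2 + p.2 ^ 2)

section StereoHeight

variable {μ : ℝ}

theorem hasDerivAt_stereoProfile (hμ : 0 ≤ μ) {s : ℝ} (hs : 0 ≤ s) :
    HasDerivAt (stereoProfile μ) (-2 * μ / (1 + μ * s) ^ 2) s := by
  refine (((hasDerivAt_id' s).const_mul μ).const_sub 1 |>.fun_div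
    (((hasDerivAt_id' s).const_mul μ).const_add 1) (by positivity)).congr_deriv ?_
  field_simp
  ring

theorem hasDerivAt_stereoProfile_deriv (hμ : 0 ≤ μ) {s : ℝ} (hs : 0 ≤ s) :
    HasDerivAt (fun s => -2 * μ / (1 + μ * s) ^ 2) (4 * μ ^ 2 / (1 + μ * s) ^ 3) s := by
  refine ((hasDerivAt_const s (-2 * μ)).fun_div
    ((((hasDerivAt_id' s).const_mul μ).const_add 1).fun_pow 2) (by positivity)).congr_deriv ?_
  field_simp
  ring

theorem continuous_stereoHeight (hμ : 0 ≤ μ) : Continuous (stereoHeight μ) :=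
  continuous_iff_continuousAt.2 fun p =>
    (differentiableAt_radial (fun _ => hasDerivAt_stereoProfile hμ) p).continuousAt

theorem twiceDifferentiableOn_stereoHeight (hμ : 0 ≤ μ) (s : Set (ℝ × ℝ)) :
    TwiceDifferentiableOn (stereoHeight μ) s :=
  twiceDifferentiableOn_radial (fun _ => hasDerivAt_stereoProfile hμ)
    (fun _ => hasDerivAt_stereoProfile_deriv hμ) s

theorem lap_stereoHeight (hμ : 0 ≤ μ) (p : ℝ × ℝ) :
    lap (stereoHeight μ) p = -8 * μ * stereoHeight μ p / (1 + μ * (p.1 ^ 2 + p.2 ^ 2)) ^ 2 := by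
  have : 0 < 1 + μ * (p.1 ^ 2 + p.2 ^ 2) := by positivity
  calc lap (stereoHeight μ) p
      = 4 * (-2 * μ / (1 + μ * (p.1 ^ 2 + p.2 ^ 2)) ^ 2 +
          (p.1 ^ 2 + p.2 ^ 2) * (4 * μ ^ 2 / (1 + μ * (p.1 ^ 2 + p.2 ^ 2)) ^ 3)) :=
        lap_radial (fun _ => hasDerivAt_stereoProfile hμ)
          (fun _ => hasDerivAt_stereoProfile_deriv hμ) p
    _ = _ := by
      rw [stereoHeight, stereoProfile]
      field_simp
      ring

theorem lap_stereoHeight_add_lt (hμ : 1 < μ) {p : ℝ × ℝ} (hp : μ * (p.1 ^ 2 + p.2 ^ 2) < 1) :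
    lap (stereoHeight μ) p + 8 / (1 + p.1 ^ 2 + p.2 ^ 2) ^ 2 * stereoHeight μ p < 0 := by
  rw [lap_stereoHeight (by linarith), add_assoc]
  set n := p.1 ^ 2 + p.2 ^ 2
  have hn : 0 ≤ n := by positivity
  have hw : 0 < stereoHeight μ p := div_pos (by linarith) (by positivity)
  have hn1 : n < 1 := by nlinarith
  have hcmp : (1 + μ * n) ^ 2 < μ * (1 + n) ^ 2 := by
    have : 0 < (μ - 1) * (1 - μ * n * n) := mul_pos (by linarith) (by nlinarith)
    linear_combination this
  have : 8 / (1 + n) ^ 2 < 8 * μ / (1 + μ * n) ^ 2 := by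
    rw [div_lt_div_iff₀ (by positivity) (by positivity)]
    nlinarith
  calc -8 * μ * stereoHeight μ p / (1 + μ * n) ^ 2 + 8 / (1 + n) ^ 2 * stereoHeight μ p
      = (8 / (1 + n) ^ 2 - 8 * μ / (1 + μ * n) ^ 2) * stereoHeight μ p := by ring
    _ < 0 := mul_neg_of_neg_of_pos (by linarith) hw

end StereoHeight

theorem exists_isPosStrictSupersolution {V : Set (ℝ × ℝ)} (hVc : IsCompact (closure V))
    (hVD : closure V ⊆ {p : ℝ × ℝ | p.1 ^ 2 + p.2 ^ 2 < 1}) :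
    ∃ w, IsPosStrictSupersolution (fun p => 8 / (1 + p.1 ^ 2 + p.2 ^ 2) ^ 2) w V := by
  obtain ⟨μ, hμ, hμV⟩ := hVc.exists_forall_le' (a := 1)
    (f := fun p => 2 / (1 + (p.1 ^ 2 + p.2 ^ 2)))
    (continuous_const.div (by fun_prop) fun p => by positivity).continuousOn
    fun p hp => by
      rw [lt_div_iff₀ (by positivity)]
      linarith [show p.1 ^ 2 + p.2 ^ 2 < 1 from hVD hp]
  have hμn : ∀ p ∈ closure V, μ * (p.1 ^ 2 + p.2 ^ 2) < 1 := fun p hp => by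
    have := hμV p hp
    rw [le_div_iff₀ (by positivity)] at this
    nlinarith [hVD hp]
  exact ⟨stereoHeight μ, (continuous_stereoHeight (by linarith)).continuousOn,
    twiceDifferentiableOn_stereoHeight (by linarith) V,
    fun p hp => div_pos (by linarith [hμn p hp]) (by nlinarith [hμn p hp]),
    fun p hp => lap_stereoHeight_add_lt hμ (hμn p (subset_closure hp))⟩

/-- Uniqueness for the Dirichlet problem of `Δφ + 8φ/(1 + x² + y²)² = 0` on bounded open
sets compactly contained in the unit disk. -/
theorem dirichlet_uniqueness_kappa_one
    (V : Set (ℝ × ℝ)) (hVo : IsOpen V) (hVb : Bornology.IsBounded V)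
    (hVD : closure V ⊆ {p : ℝ × ℝ | p.1 ^ 2 + p.2 ^ 2 < 1})
    (φ₁ φ₂ : ℝ × ℝ → ℝ)
    (hc1 : ContinuousOn φ₁ (closure V)) (hc2 : ContinuousOn φ₂ (closure V))
    (hd1 : ∀ p ∈ V, DifferentiableAt ℝ φ₁ p ∧
      DifferentiableAt ℝ (pdx φ₁) p ∧ DifferentiableAt ℝ (pdy φ₁) p)
    (hd2 : ∀ p ∈ V, DifferentiableAt ℝ φ₂ p ∧
      DifferentiableAt ℝ (pdx φ₂) p ∧ DifferentiableAt ℝ (pdy φ₂) p)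
    (hpde1 : ∀ p ∈ V, lap φ₁ p + 8 * φ₁ p / (1 + p.1 ^ 2 + p.2 ^ 2) ^ 2 = 0)
    (hpde2 : ∀ p ∈ V, lap φ₂ p + 8 * φ₂ p / (1 + p.1 ^ 2 + p.2 ^ 2) ^ 2 = 0)
    (hbd : ∀ p ∈ frontier V, φ₁ p = φ₂ p) :
    ∀ p ∈ closure V, φ₁ p = φ₂ p := by
  have hVc : IsCompact (closure V) := hVb.isCompact_closure
  obtain ⟨w, hw⟩ := exists_isPosStrictSupersolution hVc hVD
  have hsol : ∀ p ∈ V, lap φ₂ p + 8 / (1 + p.1 ^ 2 + p.2 ^ 2) ^ 2 * φ₂ p =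
      lap φ₁ p + 8 / (1 + p.1 ^ 2 + p.2 ^ 2) ^ 2 * φ₁ p := fun p hp => by
    rw [div_mul_eq_mul_div, div_mul_eq_mul_div, hpde1 p hp, hpde2 p hp]
  intro p hp
  exact le_antisymm
    (le_of_isPosStrictSupersolution hVo hVc hw hc1 hc2 hd1 hd2 (fun q hq => (hsol q hq).le)
      (fun q hq => (hbd q hq).le) p hp)
    (le_of_isPosStrictSupersolution hVo hVc hw hc2 hc1 hd2 hd1 (fun q hq => (hsol q hq).ge)
      (fun q hq => (hbd q hq).ge) p hp)
end

section
/- For every natural number n and every complex number c, the function u defined on 𝔻 by u(x,y) ≔ Re( c · ((1 + x² + y²)/(1 − x² − y²) + n) · (x + iy)ⁿ ) satisfies Δu − 8·u/(1 − x² − y²)² = 0 at every point of 𝔻. -/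
/-!
For a radial profile `ψ` and a holomorphic `f`, the product rule gives
`Δ (ψ(|z|²) f(z)) = (4 ψ' + 4 |z|² ψ'') f + 4 ψ' z f'`: the second derivatives of `f` cancel
because `f_xx + f_yy = f'' + i² f''`. For `f = c zⁿ` one has `z f' = n f`, so the claim reduces,
after taking real parts, to the ODE `4 s ψ'' + 4 (n + 1) ψ' = 8 ψ / (1 - s)²` for the profile
`ψ(s) = (1 + s) / (1 - s) + n`, which is checked directly.
-/

open Complex Filter Topology

lemma hasFDerivAt_re_comp {F : ℝ × ℝ → ℂ} {p : ℝ × ℝ} (hF : DifferentiableAt ℝ F p) :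
    HasFDerivAt (fun q => (F q).re) (reCLM.comp (fderiv ℝ F p)) p :=
  reCLM.hasFDerivAt.comp p hF.hasFDerivAt

lemma pdx_re_eq {F : ℝ × ℝ → ℂ} {p : ℝ × ℝ} {d : ℂ} (hF : DifferentiableAt ℝ F p)
    (hd : HasDerivAt (fun t => F (t, p.2)) d p.1) : pdx (fun q => (F q).re) p = d.re := by
  have hline : HasDerivAt (fun t : ℝ => (t, p.2)) ((1 : ℝ), (0 : ℝ)) p.1 :=
    (hasDerivAt_id p.1).prodMk (hasDerivAt_const p.1 p.2)
  rw [pdx, (hasFDerivAt_re_comp hF).fderiv, ContinuousLinearMap.comp_apply,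
    (hF.hasFDerivAt.comp_hasDerivAt p.1 hline).unique hd]
  rfl

lemma pdy_re_eq {F : ℝ × ℝ → ℂ} {p : ℝ × ℝ} {d : ℂ} (hF : DifferentiableAt ℝ F p)
    (hd : HasDerivAt (fun t => F (p.1, t)) d p.2) : pdy (fun q => (F q).re) p = d.re := by
  have hline : HasDerivAt (fun t : ℝ => (p.1, t)) ((0 : ℝ), (1 : ℝ)) p.2 :=
    (hasDerivAt_const p.2 p.1).prodMk (hasDerivAt_id p.2)
  rw [pdy, (hasFDerivAt_re_comp hF).fderiv, ContinuousLinearMap.comp_apply,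
    (hF.hasFDerivAt.comp_hasDerivAt p.2 hline).unique hd]
  rfl

section RadialMulHolomorphic

variable {ψ ψ' : ℝ → ℂ} {f f' : ℂ → ℂ}

lemma hasDerivAt_radial_mul_holomorphic_horizontal {a b : ℂ} {t y : ℝ}
    (hψ : HasDerivAt ψ a (t ^ 2 + y ^ 2)) (hf : HasDerivAt f b (t + y * I)) :
    HasDerivAt (fun t : ℝ => ψ (t ^ 2 + y ^ 2) * f (t + y * I))
      (2 * t * a * f (t + y * I) + ψ (t ^ 2 + y ^ 2) * b) t := by
  have hs : HasDerivAt (fun t : ℝ => t ^ 2 + y ^ 2) (2 * t) t := by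
    simpa using (hasDerivAt_pow 2 t).add_const (y ^ 2)
  have hz : HasDerivAt (fun t : ℝ => (t : ℂ) + y * I) 1 t :=
    (hasDerivAt_id t).ofReal_comp.add_const _
  refine ((hψ.scomp t hs).mul (hf.comp t hz)).congr_deriv ?_
  simp only [Function.comp_apply, real_smul, ofReal_mul, ofReal_ofNat]
  ring

lemma hasDerivAt_radial_mul_holomorphic_vertical {a b : ℂ} {x t : ℝ}
    (hψ : HasDerivAt ψ a (x ^ 2 + t ^ 2)) (hf : HasDerivAt f b (x + t * I)) :
    HasDerivAt (fun t : ℝ => ψ (x ^ 2 + t ^ 2) * f (x + t * I))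
      (2 * t * a * f (x + t * I) + ψ (x ^ 2 + t ^ 2) * (I * b)) t := by
  have hs : HasDerivAt (fun t : ℝ => x ^ 2 + t ^ 2) (2 * t) t := by
    simpa using (hasDerivAt_pow 2 t).const_add (x ^ 2)
  have hz : HasDerivAt (fun t : ℝ => (x : ℂ) + t * I) I t := by
    simpa using ((hasDerivAt_id t).ofReal_comp.mul_const I).const_add (x : ℂ)
  refine ((hψ.scomp t hs).mul (hf.comp t hz)).congr_deriv ?_
  simp only [Function.comp_apply, real_smul, ofReal_mul, ofReal_ofNat]
  ring

lemma differentiableAt_radial_mul_holomorphic {q : ℝ × ℝ}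
    (hψ : DifferentiableAt ℝ ψ (q.1 ^ 2 + q.2 ^ 2)) (hf : DifferentiableAt ℂ f (q.1 + q.2 * I)) :
    DifferentiableAt ℝ (fun q : ℝ × ℝ => ψ (q.1 ^ 2 + q.2 ^ 2) * f (q.1 + q.2 * I)) q := by
  have hs : DifferentiableAt ℝ (fun q : ℝ × ℝ => q.1 ^ 2 + q.2 ^ 2) q := by fun_prop
  have hz : DifferentiableAt ℝ (fun q : ℝ × ℝ => (q.1 : ℂ) + q.2 * I) q := by fun_prop
  exact (hψ.comp q hs).mul ((hf.restrictScalars ℝ).comp q hz)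

variable {p : ℝ × ℝ}
  (hψ : ∀ᶠ t in 𝓝 (p.1 ^ 2 + p.2 ^ 2), HasDerivAt ψ (ψ' t) t)
  (hf : ∀ᶠ w in 𝓝 ((p.1 : ℂ) + p.2 * I), HasDerivAt f (f' w) w)
include hψ hf

lemma pdx_re_radial_mul_holomorphic_eventuallyEq :
    pdx (fun q : ℝ × ℝ => (ψ (q.1 ^ 2 + q.2 ^ 2) * f (q.1 + q.2 * I)).re) =ᶠ[𝓝 p]
      fun q => (2 * q.1 * (ψ' (q.1 ^ 2 + q.2 ^ 2) * f (q.1 + q.2 * I))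
        + ψ (q.1 ^ 2 + q.2 ^ 2) * f' (q.1 + q.2 * I)).re := by
  filter_upwards
    [(by fun_prop : Continuous fun q : ℝ × ℝ => q.1 ^ 2 + q.2 ^ 2).tendsto p |>.eventually hψ,
    (by fun_prop : Continuous fun q : ℝ × ℝ => (q.1 : ℂ) + q.2 * I).tendsto p |>.eventually hf]
    with q hψq hfq
  rw [pdx_re_eq (differentiableAt_radial_mul_holomorphic hψq.differentiableAt hfq.differentiableAt)
    (hasDerivAt_radial_mul_holomorphic_horizontal hψq hfq), mul_assoc]

lemma pdy_re_radial_mul_holomorphic_eventuallyEq :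
    pdy (fun q : ℝ × ℝ => (ψ (q.1 ^ 2 + q.2 ^ 2) * f (q.1 + q.2 * I)).re) =ᶠ[𝓝 p]
      fun q => (2 * q.2 * (ψ' (q.1 ^ 2 + q.2 ^ 2) * f (q.1 + q.2 * I))
        + I * (ψ (q.1 ^ 2 + q.2 ^ 2) * f' (q.1 + q.2 * I))).re := by
  filter_upwards
    [(by fun_prop : Continuous fun q : ℝ × ℝ => q.1 ^ 2 + q.2 ^ 2).tendsto p |>.eventually hψ,
    (by fun_prop : Continuous fun q : ℝ × ℝ => (q.1 : ℂ) + q.2 * I).tendsto p |>.eventually hf]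
    with q hψq hfq
  rw [pdy_re_eq (differentiableAt_radial_mul_holomorphic hψq.differentiableAt hfq.differentiableAt)
    (hasDerivAt_radial_mul_holomorphic_vertical hψq hfq), mul_assoc, mul_left_comm I]

theorem lap_re_radial_mul_holomorphic {ψ'' : ℂ} (hψ' : HasDerivAt ψ' ψ'' (p.1 ^ 2 + p.2 ^ 2))
    (hf' : DifferentiableAt ℂ f' (p.1 + p.2 * I)) :
    lap (fun q : ℝ × ℝ => (ψ (q.1 ^ 2 + q.2 ^ 2) * f (q.1 + q.2 * I)).re) p
      = ((4 * ψ' (p.1 ^ 2 + p.2 ^ 2) + 4 * (p.1 ^ 2 + p.2 ^ 2 : ℝ) * ψ'') * f (p.1 + p.2 * I)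
          + 4 * ψ' (p.1 ^ 2 + p.2 ^ 2) * (p.1 + p.2 * I) * f' (p.1 + p.2 * I)).re := by
  have hψp := hψ.self_of_nhds
  have hfp := hf.self_of_nhds
  have hd₁ := differentiableAt_radial_mul_holomorphic hψ'.differentiableAt hfp.differentiableAt
  have hd₂ := differentiableAt_radial_mul_holomorphic hψp.differentiableAt hf'
  rw [lap, pdx, (pdx_re_radial_mul_holomorphic_eventuallyEq hψ hf).fderiv_eq, ← pdx,
    pdy, (pdy_re_radial_mul_holomorphic_eventuallyEq hψ hf).fderiv_eq, ← pdy,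
    pdx_re_eq (by fun_prop) (((hasDerivAt_id p.1).ofReal_comp.const_mul 2).mul
      (hasDerivAt_radial_mul_holomorphic_horizontal hψ' hfp) |>.add
      (hasDerivAt_radial_mul_holomorphic_horizontal hψp hf'.hasDerivAt)),
    pdy_re_eq (by fun_prop) (((hasDerivAt_id p.2).ofReal_comp.const_mul 2).mul
      (hasDerivAt_radial_mul_holomorphic_vertical hψ' hfp) |>.add
      ((hasDerivAt_radial_mul_holomorphic_vertical hψp hf'.hasDerivAt).const_mul I)), ← add_re]
  congr 1
  push_cast [id_eq]
  linear_combination (ψ (p.1 ^ 2 + p.2 ^ 2) * deriv f' (p.1 + p.2 * I)) * I_mul_I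

end RadialMulHolomorphic

lemma mul_natCast_mul_pow_sub_one {R : Type*} [CommSemiring R] (a : R) (n : ℕ) :
    a * (n * a ^ (n - 1)) = n * a ^ n := by
  rcases eq_or_ne n 0 with rfl | hn
  · simp
  · rw [mul_left_comm, mul_pow_sub_one hn]

theorem lap_re_radial_mul_monomial {ψ ψ' : ℝ → ℂ} {ψ'' : ℂ} {p : ℝ × ℝ} (c : ℂ) (n : ℕ)
    (hψ : ∀ᶠ t in 𝓝 (p.1 ^ 2 + p.2 ^ 2), HasDerivAt ψ (ψ' t) t)
    (hψ' : HasDerivAt ψ' ψ'' (p.1 ^ 2 + p.2 ^ 2)) :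
    lap (fun q : ℝ × ℝ => (ψ (q.1 ^ 2 + q.2 ^ 2) * (c * (q.1 + q.2 * I) ^ n)).re) p
      = ((4 * (n + 1) * ψ' (p.1 ^ 2 + p.2 ^ 2) + 4 * (p.1 ^ 2 + p.2 ^ 2 : ℝ) * ψ'')
          * (c * (p.1 + p.2 * I) ^ n)).re := by
  have hf (w : ℂ) : HasDerivAt (fun w => c * w ^ n) (c * (n * w ^ (n - 1))) w :=
    (hasDerivAt_pow n w).const_mul c
  rw [lap_re_radial_mul_holomorphic hψ (.of_forall hf) hψ' (by fun_prop)]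
  congr 1
  linear_combination 4 * ψ' (p.1 ^ 2 + p.2 ^ 2) * c * mul_natCast_mul_pow_sub_one (p.1 + p.2 * I) n

lemma hasDerivAt_one_add_div_one_sub_add (n : ℕ) {t : ℝ} (ht : 1 - t ≠ 0) :
    HasDerivAt (fun t : ℝ => (1 + t) / (1 - t) + n) (2 / (1 - t) ^ 2) t := by
  refine ((((hasDerivAt_id t).const_add 1).div ((hasDerivAt_id t).const_sub 1) ht).add_const
    (n : ℝ)).congr_deriv ?_
  simp only [id_eq]
  field_simp
  ring

lemma hasDerivAt_two_div_one_sub_sq {t : ℝ} (ht : 1 - t ≠ 0) :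
    HasDerivAt (fun t : ℝ => 2 / (1 - t) ^ 2) (4 / (1 - t) ^ 3) t := by
  refine ((hasDerivAt_const t (2 : ℝ)).div (((hasDerivAt_id t).const_sub 1).pow 2)
    (pow_ne_zero 2 ht)).congr_deriv ?_
  simp only [id_eq, Pi.pow_apply]
  field_simp
  ring

lemma one_add_div_one_sub_add_ode (n : ℕ) {s : ℝ} (hs : 1 - s ≠ 0) :
    4 * (n + 1) * (2 / (1 - s) ^ 2) + 4 * s * (4 / (1 - s) ^ 3)
      = 8 / (1 - s) ^ 2 * ((1 + s) / (1 - s) + n) := by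
  field_simp
  ring

/-- For each `n ∈ ℕ`, `c ∈ ℂ`, the function
`u(x,y) = Re(c ((1+x²+y²)/(1−x²−y²) + n) (x+iy)ⁿ)` solves
`Δu − 8u/(1 − x² − y²)² = 0` on the unit disk. -/
theorem mode_solutions_kappa_neg_one (n : ℕ) (c : ℂ) :
    letI u : ℝ × ℝ → ℝ := fun p =>
      (c * ((((1 + p.1 ^ 2 + p.2 ^ 2) / (1 - p.1 ^ 2 - p.2 ^ 2) + (n : ℝ)) : ℝ) : ℂ)
        * ((p.1 : ℂ) + (p.2 : ℂ) * Complex.I) ^ n).re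
    ∀ p : ℝ × ℝ, p.1 ^ 2 + p.2 ^ 2 < 1 →
      lap u p - 8 * u p / (1 - p.1 ^ 2 - p.2 ^ 2) ^ 2 = 0 := by
  intro p hp
  have hu (q : ℝ × ℝ) :
      (c * (((1 + q.1 ^ 2 + q.2 ^ 2) / (1 - q.1 ^ 2 - q.2 ^ 2) + n : ℝ) : ℂ)
        * (q.1 + q.2 * I) ^ n).re
      = ((((1 + (q.1 ^ 2 + q.2 ^ 2)) / (1 - (q.1 ^ 2 + q.2 ^ 2)) + n : ℝ) : ℂ)
        * (c * (q.1 + q.2 * I) ^ n)).re := by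
    rw [← add_assoc, ← sub_sub, mul_left_comm, mul_assoc]
  have hψ : ∀ᶠ t in 𝓝 (p.1 ^ 2 + p.2 ^ 2),
      HasDerivAt (fun t : ℝ => (((1 + t) / (1 - t) + n : ℝ) : ℂ)) ((2 / (1 - t) ^ 2 : ℝ) : ℂ) t := by
    filter_upwards [eventually_ne_nhds hp.ne] with t ht
    exact (hasDerivAt_one_add_div_one_sub_add n (sub_ne_zero.2 ht.symm)).ofReal_comp
  have hψ' := (hasDerivAt_two_div_one_sub_sq (sub_ne_zero.2 hp.ne')).ofReal_comp
  have hode := one_add_div_one_sub_add_ode n (sub_ne_zero.2 hp.ne')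
  simp only [hu, lap_re_radial_mul_monomial c n hψ hψ']
  rw [sub_sub 1, ← ofReal_natCast, ← ofReal_one]
  simp only [← ofReal_ofNat, ← ofReal_add, ← ofReal_mul, re_ofReal_mul, hode]
  ring
end
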